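/- arXiv:2502.15201 — 11 statements merged into one kernel-verified Lean document; each statement's English description precedes it below -/
import Mathlib

section
/- Let ε > 0, g₁ > 0, θ ∈ [0,1), and let t₀ < t₁ with τ := t₁ − t₀. Let x₀ ∈ ℝ with |x₀| ≤ θ·ε and let u₀ ∈ ℝ. Let g : ℝ → ℝ be integrable on [t₀,t₁] with g(s) ≥ g₁ for all s ∈ [t₀,t₁]. If ϖ ≥ 2ε/(g₁·τ) + u₀ and δ(s) = −ϖ for all s, then x₁ := x₀ + ∫_{t₀}^{t₁} g(s)·(u₀ + δ(s)) ds satisfies x₁ ≤ −ε. -/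
open MeasureTheory intervalIntegral

/-- Explicit destabilizing constant perturbation (construction in
Proposition 1). If ϖ ≥ 2ε/(g₁τ) + u₀ and δ ≡ -ϖ, then after one zero-order-hold
interval the state is pushed to `x₁ ≤ -ε`. -/
theorem stmt_0 (ε g₁ θ t₀ t₁ τ x₀ u₀ ϖ : ℝ)
    (hε : 0 < ε) (hg₁ : 0 < g₁) (hθ0 : 0 ≤ θ) (hθ1 : θ < 1)
    (ht : t₀ < t₁) (hτ : τ = t₁ - t₀)
    (hx₀ : |x₀| ≤ θ * ε)
    (g : ℝ → ℝ) (hg_int : IntervalIntegrable g volume t₀ t₁)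
    (hg_lb : ∀ s ∈ Set.Icc t₀ t₁, g₁ ≤ g s)
    (hϖ : 2 * ε / (g₁ * τ) + u₀ ≤ ϖ)
    (δ : ℝ → ℝ) (hδ : ∀ s, δ s = -ϖ) :
    x₀ + ∫ s in t₀..t₁, g s * (u₀ + δ s) ≤ -ε := by
  have hτpos : 0 < τ := by rw [hτ]; linarith
  have hc : u₀ - ϖ ≤ -(2 * ε / (g₁ * τ)) := by linarith
  have hcneg : u₀ - ϖ ≤ 0 := by
    have : 0 < 2 * ε / (g₁ * τ) := by positivity
    linarith
  have heq : (∫ s in t₀..t₁, g s * (u₀ + δ s)) = (u₀ - ϖ) * ∫ s in t₀..t₁, g s := by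
    rw [← intervalIntegral.integral_const_mul]
    apply intervalIntegral.integral_congr
    intro s _
    simp only [hδ]; ring
  have hint_lb : g₁ * τ ≤ ∫ s in t₀..t₁, g s := by
    have := intervalIntegral.integral_mono_on ht.le
      (_root_.intervalIntegrable_const (c := g₁)) hg_int hg_lb
    simpa [hτ, mul_comm] using this
  have key : (u₀ - ϖ) * ∫ s in t₀..t₁, g s ≤ -(2 * ε) := by
    calc (u₀ - ϖ) * ∫ s in t₀..t₁, g s ≤ (u₀ - ϖ) * (g₁ * τ) :=
          mul_le_mul_of_nonpos_left hint_lb hcneg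
      _ ≤ -(2 * ε / (g₁ * τ)) * (g₁ * τ) := by
          apply mul_le_mul_of_nonneg_right hc (by positivity)
      _ = -(2 * ε) := by field_simp
  have hx : x₀ ≤ ε := by
    have := (abs_le.mp hx₀).2
    nlinarith
  rw [heq]; linarith
end

section
/- Let ε > 0, g₁ > 0, θ ∈ [0,1), and let t₀ < t₁. For every x₀ ∈ ℝ with |x₀| ≤ θ·ε, every u₀ ∈ ℝ, and every integrable g : ℝ → ℝ with g(s) ≥ g₁ on [t₀,t₁], there exists a bounded constant perturbation δ : ℝ → ℝ (i.e., a constant function) such that x₁ := x₀ + ∫_{t₀}^{t₁} g(s)·(u₀ + δ(s)) ds satisfies x₁ ∉ (−ε, ε). Consequently no single control value applied through zero-order hold can keep the state in the predefined set against all bounded perturbations. -/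
open MeasureTheory intervalIntegral

/-- Proposition 1: for any initial state in the final set and any
constant control value applied through zero-order hold, there exists a bounded
(indeed constant) perturbation that drives the state out of the predefined set
`(-ε, ε)` in one sampling interval. -/
theorem stmt_1 (ε g₁ θ t₀ t₁ : ℝ)
    (hε : 0 < ε) (hg₁ : 0 < g₁) (hθ0 : 0 ≤ θ) (hθ1 : θ < 1)
    (ht : t₀ < t₁) :
    ∀ x₀ : ℝ, |x₀| ≤ θ * ε →
    ∀ u₀ : ℝ,
    ∀ g : ℝ → ℝ, IntervalIntegrable g volume t₀ t₁ →
      (∀ s ∈ Set.Icc t₀ t₁, g₁ ≤ g s) →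
    ∃ δ : ℝ → ℝ, (∃ c : ℝ, ∀ s, δ s = c) ∧
      (x₀ + ∫ s in t₀..t₁, g s * (u₀ + δ s)) ∉ Set.Ioo (-ε) ε := by
  intro x₀ hx₀ u₀ g hgint hglb
  set M : ℝ := 2 * ε / (g₁ * (t₁ - t₀)) with hM
  have hstep : 0 < g₁ * (t₁ - t₀) := mul_pos hg₁ (by linarith)
  have hMpos : 0 < M := div_pos (by linarith) hstep
  refine ⟨fun _ => -u₀ + M, ⟨-u₀ + M, fun _ => rfl⟩, ?_⟩
  have hint : (∫ s in t₀..t₁, g s * (u₀ + (-u₀ + M))) = (∫ s in t₀..t₁, g s) * M := by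
    rw [← intervalIntegral.integral_mul_const]
    congr 1; funext s; ring
  have hmono : g₁ * (t₁ - t₀) ≤ ∫ s in t₀..t₁, g s := by
    have : (∫ _ in t₀..t₁, g₁) ≤ ∫ s in t₀..t₁, g s :=
      intervalIntegral.integral_mono_on ht.le intervalIntegrable_const hgint hglb
    simpa [intervalIntegral.integral_const, mul_comm] using this
  have h2ε : 2 * ε ≤ (∫ s in t₀..t₁, g s) * M := by
    have : g₁ * (t₁ - t₀) * M ≤ (∫ s in t₀..t₁, g s) * M :=
      mul_le_mul_of_nonneg_right hmono hMpos.le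
    rw [hM, mul_div_cancel₀ _ hstep.ne'] at this
    exact this
  have hx₀' : -ε ≤ x₀ := by
    have h1 : θ * ε ≤ ε := by nlinarith
    have := abs_le.mp hx₀
    linarith [this.1]
  intro hmem
  rw [hint] at hmem
  have := hmem.2
  linarith
end

section
/- Let ε > 0, 0 < g₁ ≤ g₂, 0 < δ̄ ≤ c₁, τ > 0, and let t_k < t_{k+1} with t_{k+1} − t_k = τ. Let g, δ : ℝ → ℝ be integrable on [t_k, t_{k+1}] with g₁ ≤ g(s) ≤ g₂ and |δ(s)| ≤ δ̄ for all s ∈ [t_k, t_{k+1}]. Suppose (δ̄/(δ̄+1))·ε ≤ x_k ≤ (c₁/(c₁+1))·ε, and set u_k = −x_k/(ε − x_k) and x_{k+1} = x_k + ∫_{t_k}^{t_{k+1}} g(s)·(δ(s) + u_k) ds. Then x_{k+1} ≤ x_k and x_{k+1} ≥ x_k − g₂·τ·(δ̄ + c₁). -/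
open MeasureTheory intervalIntegral

/-- one-step displacement bounds, Case 1 of Proposition 2:
from the positive part of Div 3, one sampling step of the barrier-function
closed loop does not increase the state and decreases it by at most
`g₂τ(δ̄ + c₁)`. -/
theorem stmt_7 (ε g₁ g₂ δb c₁ τ tk tk1 xk uk xk1 : ℝ)
    (hε : 0 < ε) (hg₁ : 0 < g₁) (hg₁₂ : g₁ ≤ g₂)
    (hδb : 0 < δb) (hδc : δb ≤ c₁) (hτ : 0 < τ)
    (ht : tk < tk1) (hτ' : tk1 - tk = τ)
    (g δ : ℝ → ℝ)
    (hg_int : IntervalIntegrable g volume tk tk1)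
    (hδ_int : IntervalIntegrable δ volume tk tk1)
    (hg_bd : ∀ s ∈ Set.Icc tk tk1, g₁ ≤ g s ∧ g s ≤ g₂)
    (hδ_bd : ∀ s ∈ Set.Icc tk tk1, |δ s| ≤ δb)
    (hxk_lb : (δb / (δb + 1)) * ε ≤ xk)
    (hxk_ub : xk ≤ (c₁ / (c₁ + 1)) * ε)
    (huk : uk = -xk / (ε - xk))
    (hxk1 : xk1 = xk + ∫ s in tk..tk1, g s * (δ s + uk)) :
    xk1 ≤ xk ∧ xk - g₂ * τ * (δb + c₁) ≤ xk1 := by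
  have htk : tk ≤ tk1 := ht.le
  have hc1 : 0 < c₁ := hδb.trans_le hδc
  have hc1' : 0 < c₁ + 1 := by linarith
  have hδb' : 0 < δb + 1 := by linarith
  have hg2 : 0 < g₂ := hg₁.trans_le hg₁₂
  -- clear denominators in the hypotheses on xk
  have h1 : xk * (c₁ + 1) ≤ c₁ * ε := by
    have h := hxk_ub
    rw [div_mul_eq_mul_div, le_div_iff₀ hc1'] at h
    linarith
  have h2 : δb * ε ≤ xk * (δb + 1) := by
    have h := hxk_lb
    rw [div_mul_eq_mul_div, div_le_iff₀ hδb'] at h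
    linarith
  have hεx : 0 < ε - xk := by nlinarith
  -- bounds on uk
  have huk_le : uk ≤ -δb := by
    rw [huk, div_le_iff₀ hεx]; nlinarith
  have huk_ge : -c₁ ≤ uk := by
    rw [huk, le_div_iff₀ hεx]; nlinarith
  -- integrability of the integrand
  have hmono : Set.uIoc tk tk1 ⊆ Set.Icc tk tk1 := by
    rw [Set.uIoc_of_le htk]; exact Set.Ioc_subset_Icc_self
  have hgδ : IntervalIntegrable (fun s => g s * δ s) volume tk tk1 := by
    rw [intervalIntegrable_iff] at hδ_int hg_int ⊢
    refine hδ_int.bdd_mul (c := g₂) hg_int.aestronglyMeasurable ?_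
    filter_upwards [ae_restrict_mem measurableSet_uIoc] with s hs
    have := hg_bd s (hmono hs)
    rw [Real.norm_eq_abs, abs_le]
    constructor <;> linarith [this.1, this.2]
  have hint : IntervalIntegrable (fun s => g s * (δ s + uk)) volume tk tk1 := by
    have := hgδ.add (hg_int.mul_const uk)
    simpa [mul_add] using this
  -- pointwise bounds on the integrand
  have hub : ∀ s ∈ Set.Icc tk tk1, g s * (δ s + uk) ≤ 0 := by
    intro s hs
    obtain ⟨hgl, hgu⟩ := hg_bd s hs
    have hδs := abs_le.mp (hδ_bd s hs)
    have hA : δ s + uk ≤ 0 := by linarith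
    nlinarith
  have hlb : ∀ s ∈ Set.Icc tk tk1, -(g₂ * (δb + c₁)) ≤ g s * (δ s + uk) := by
    intro s hs
    obtain ⟨hgl, hgu⟩ := hg_bd s hs
    have hδs := abs_le.mp (hδ_bd s hs)
    have hA0 : δ s + uk ≤ 0 := by linarith
    have hA1 : -(δb + c₁) ≤ δ s + uk := by linarith
    nlinarith [mul_nonneg (sub_nonneg.mpr hgu) (neg_nonneg.mpr hA0)]
  -- integral bounds
  have hI_le : (∫ s in tk..tk1, g s * (δ s + uk)) ≤ 0 := by
    have := intervalIntegral.integral_mono_on htk hint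
      (_root_.intervalIntegrable_const (c := (0:ℝ))) hub
    simpa using this
  have hI_ge : -(g₂ * (δb + c₁)) * τ ≤ ∫ s in tk..tk1, g s * (δ s + uk) := by
    have := intervalIntegral.integral_mono_on htk
      (_root_.intervalIntegrable_const (c := -(g₂ * (δb + c₁)))) hint hlb
    rw [intervalIntegral.integral_const, hτ', smul_eq_mul] at this
    linarith
  constructor
  · linarith [hI_le, hxk1.ge, hxk1.le]
  · rw [hxk1]; nlinarith [hI_ge]
end

section
/- Let ε > 0, 0 < g₁ ≤ g₂, 0 < δ̄ ≤ c₁, τ > 0 with g₂·τ ≤ ε/(c₁ + 1)², and let t_k < t_{k+1} with t_{k+1} − t_k = τ. Let g, δ : ℝ → ℝ be integrable on [t_k, t_{k+1}] with g₁ ≤ g(s) ≤ g₂ and |δ(s)| ≤ δ̄ for all s ∈ [t_k, t_{k+1}]. Suppose (δ̄/(δ̄+1))·ε ≤ x_k ≤ (c₁/(c₁+1))·ε, and set u_k = −x_k/(ε − x_k) and x_{k+1} = x_k + ∫_{t_k}^{t_{k+1}} g(s)·(δ(s) + u_k) ds. Then −(δ̄/(δ̄+1))·ε ≤ x_{k+1}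 ≤ x_k. -/
open MeasureTheory intervalIntegral

/-!
The barrier gain `a = x / (ε - x)` inverts `a ↦ a / (a + 1) * ε`, so on Div 3 it lies in
`[δ̄, c₁]`. Hence `δ(s) + u_k = δ(s) - a ≤ δ̄ - a ≤ 0`, and the integrand `g (δ + u_k)` lies in
`[-g₂ (δ̄ + a), 0]`: the state cannot increase, and it drops by at most
`g₂ τ (δ̄ + a) ≤ ε (δ̄ + a) / (c₁ + 1)²`. Since `(c₁ + 1)²` dominates both `δ̄ + 1` and `a + 1`,
this drop is at most `(δ̄ / (δ̄ + 1)) ε + x_k`.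
-/

lemma div_add_one_mul_lt {c ε : ℝ} (hc : 0 < c + 1) (hε : 0 < ε) : c / (c + 1) * ε < ε :=
  mul_lt_of_lt_one_left hε ((div_lt_one hc).2 (lt_add_one c))

lemma le_div_sub_iff {c x ε : ℝ} (hx : x < ε) (hc : 0 < c + 1) :
    c ≤ x / (ε - x) ↔ c / (c + 1) * ε ≤ x := by
  rw [le_div_iff₀ (sub_pos.2 hx), div_mul_eq_mul_div, div_le_iff₀ hc]
  constructor <;> intro h <;> linarith

lemma div_sub_le_iff {c x ε : ℝ} (hx : x < ε) (hc : 0 < c + 1) :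
    x / (ε - x) ≤ c ↔ x ≤ c / (c + 1) * ε := by
  rw [div_le_iff₀ (sub_pos.2 hx), div_mul_eq_mul_div, le_div_iff₀ hc]
  constructor <;> intro h <;> linarith

lemma div_sub_div_add_one_mul {x ε : ℝ} (hx : x < ε) (hε : ε ≠ 0) :
    x / (ε - x) / (x / (ε - x) + 1) * ε = x := by
  have : ε - x ≠ 0 := (sub_pos.2 hx).ne'
  field_simp
  rw [add_sub_cancel, mul_div_cancel_right₀ x hε]

lemma mul_sub_mem_Icc {g G d D a : ℝ} (hg : 0 ≤ g) (hgG : g ≤ G) (hd : |d| ≤ D) (hDa : D ≤ a) :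
    g * (d - a) ∈ Set.Icc (-(G * (D + a))) 0 := by
  obtain ⟨hd₁, hd₂⟩ := abs_le.1 hd
  have hD : 0 ≤ D := (abs_nonneg d).trans hd
  constructor
  · nlinarith
  · exact mul_nonpos_of_nonneg_of_nonpos hg (by linarith)

lemma IntervalIntegrable.mul_of_abs_le {f h : ℝ → ℝ} {a b C : ℝ} (hab : a ≤ b)
    (hf : IntervalIntegrable f volume a b) (hh : IntervalIntegrable h volume a b)
    (hbd : ∀ s ∈ Set.Icc a b, |f s| ≤ C) :
    IntervalIntegrable (fun s => f s * h s) volume a b := by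
  rw [intervalIntegrable_iff_integrableOn_Ioc_of_le hab] at hf hh ⊢
  refine hh.bdd_mul (c := C) hf.aestronglyMeasurable ?_
  filter_upwards [ae_restrict_mem measurableSet_Ioc] with s hs
  exact hbd s (Set.Ioc_subset_Icc_self hs)

lemma intervalIntegral.integral_mem_Icc_of_mem_Icc {f : ℝ → ℝ} {a b m M : ℝ} (hab : a ≤ b)
    (hf : IntervalIntegrable f volume a b) (hbd : ∀ s ∈ Set.Icc a b, f s ∈ Set.Icc m M) :
    ∫ s in a..b, f s ∈ Set.Icc ((b - a) * m) ((b - a) * M) := by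
  constructor
  · simpa using integral_mono_on hab intervalIntegrable_const hf fun s hs => (hbd s hs).1
  · simpa using integral_mono_on hab hf intervalIntegrable_const fun s hs => (hbd s hs).2

lemma neg_div_add_one_mul_le {δ a c ε : ℝ} (hδ : 0 ≤ δ) (hδa : δ ≤ a) (hac : a ≤ c)
    (hε : 0 ≤ ε) : -(δ / (δ + 1)) * ε ≤ a / (a + 1) * ε - ε / (c + 1) ^ 2 * (δ + a) := by
  have hδc : δ + 1 ≤ (c + 1) ^ 2 := by nlinarith
  have hac' : a + 1 ≤ (c + 1) ^ 2 := by nlinarith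
  have h₁ : δ / (c + 1) ^ 2 ≤ δ / (δ + 1) := div_le_div_of_nonneg_left hδ (by linarith) hδc
  have h₂ : a / (c + 1) ^ 2 ≤ a / (a + 1) :=
    div_le_div_of_nonneg_left (hδ.trans hδa) (by linarith) hac'
  have : ε / (c + 1) ^ 2 * (δ + a) = (δ / (c + 1) ^ 2 + a / (c + 1) ^ 2) * ε := by ring
  rw [this]
  have := mul_le_mul_of_nonneg_right (add_le_add h₁ h₂) hε
  linarith

theorem stmt_8_general (ε g₁ g₂ δb c₁ τ tk tk1 xk uk xk1 : ℝ)
    (hε : 0 < ε) (hg₁ : 0 < g₁)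
    (hδb : 0 < δb) (hδc : δb ≤ c₁)
    (hsamp : g₂ * τ ≤ ε / (c₁ + 1) ^ 2)
    (ht : tk < tk1) (hτ' : tk1 - tk = τ)
    (g δ : ℝ → ℝ)
    (hg_int : IntervalIntegrable g volume tk tk1)
    (hδ_int : IntervalIntegrable δ volume tk tk1)
    (hg_bd : ∀ s ∈ Set.Icc tk tk1, g₁ ≤ g s ∧ g s ≤ g₂)
    (hδ_bd : ∀ s ∈ Set.Icc tk tk1, |δ s| ≤ δb)
    (hxk_lb : (δb / (δb + 1)) * ε ≤ xk)
    (hxk_ub : xk ≤ (c₁ / (c₁ + 1)) * ε)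
    (huk : uk = -xk / (ε - xk))
    (hxk1 : xk1 = xk + ∫ s in tk..tk1, g s * (δ s + uk)) :
    -(δb / (δb + 1)) * ε ≤ xk1 ∧ xk1 ≤ xk := by
  have hc₁ : 0 < c₁ + 1 := by linarith
  have hxε : xk < ε := hxk_ub.trans_lt (div_add_one_mul_lt hc₁ hε)
  set a := xk / (ε - xk) with ha
  have hδa : δb ≤ a := (le_div_sub_iff hxε (by linarith)).2 hxk_lb
  have hac : a ≤ c₁ := (div_sub_le_iff hxε hc₁).2 hxk_ub
  have hg_pos : ∀ s ∈ Set.Icc tk tk1, 0 < g s := fun s hs => hg₁.trans_le (hg_bd s hs).1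
  simp only [huk, neg_div, ← ha, ← sub_eq_add_neg] at hxk1
  have hI := integral_mem_Icc_of_mem_Icc ht.le
    (hg_int.mul_of_abs_le ht.le (hδ_int.sub intervalIntegrable_const)
      fun s hs => (abs_of_pos (hg_pos s hs)).trans_le (hg_bd s hs).2)
    fun s hs => mul_sub_mem_Icc (hg_pos s hs).le (hg_bd s hs).2 (hδ_bd s hs) hδa
  rw [hτ'] at hI
  refine ⟨?_, by linarith [hI.2]⟩
  have hdrop : g₂ * τ * (δb + a) ≤ ε / (c₁ + 1) ^ 2 * (δb + a) :=
    mul_le_mul_of_nonneg_right hsamp (by linarith)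
  calc -(δb / (δb + 1)) * ε
      ≤ a / (a + 1) * ε - ε / (c₁ + 1) ^ 2 * (δb + a) :=
        neg_div_add_one_mul_le hδb.le hδa hac hε.le
    _ = xk - ε / (c₁ + 1) ^ 2 * (δb + a) := by rw [div_sub_div_add_one_mul hxε hε.ne']
    _ ≤ xk1 := by linarith [hI.1]

/-- conclusion of Case 1 of Proposition 2: from the positive part of
Div 3, under the sampling restriction `g₂τ ≤ ε/(c₁+1)²`, one sampling step does not
increase the state and cannot jump below the lower boundary of Div 4. -/
theorem stmt_8 (ε g₁ g₂ δb c₁ τ tk tk1 xk uk xk1 : ℝ)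
    (hε : 0 < ε) (hg₁ : 0 < g₁) (hg₁₂ : g₁ ≤ g₂)
    (hδb : 0 < δb) (hδc : δb ≤ c₁) (hτ : 0 < τ)
    (hsamp : g₂ * τ ≤ ε / (c₁ + 1) ^ 2)
    (ht : tk < tk1) (hτ' : tk1 - tk = τ)
    (g δ : ℝ → ℝ)
    (hg_int : IntervalIntegrable g volume tk tk1)
    (hδ_int : IntervalIntegrable δ volume tk tk1)
    (hg_bd : ∀ s ∈ Set.Icc tk tk1, g₁ ≤ g s ∧ g s ≤ g₂)
    (hδ_bd : ∀ s ∈ Set.Icc tk tk1, |δ s| ≤ δb)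
    (hxk_lb : (δb / (δb + 1)) * ε ≤ xk)
    (hxk_ub : xk ≤ (c₁ / (c₁ + 1)) * ε)
    (huk : uk = -xk / (ε - xk))
    (hxk1 : xk1 = xk + ∫ s in tk..tk1, g s * (δ s + uk)) :
    -(δb / (δb + 1)) * ε ≤ xk1 ∧ xk1 ≤ xk :=
  stmt_8_general ε g₁ g₂ δb c₁ τ tk tk1 xk uk xk1 hε hg₁ hδb hδc hsamp ht hτ' g δ hg_int hδ_int
    hg_bd hδ_bd hxk_lb hxk_ub huk hxk1
end

section
/- Let ε > 0, 0 < g₁ ≤ g₂, δ̄ > 0, τ > 0 with g₂·τ ≤ ε/(δ̄ + 1)², and let t_k < t_{k+1} with t_{k+1} − t_k = τ. Let g, δ : ℝ → ℝ be integrable on [t_k, t_{k+1}] with g₁ ≤ g(s) ≤ g₂ and |δ(s)| ≤ δ̄ for all s ∈ [t_k, t_{k+1}]. Suppose |x_k| ≤ (δ̄/(δ̄+1))·ε, and set u_k = −x_k/(ε − |x_k|) and x_{k+1} = x_k + ∫_{t_k}^{t_{k+1}} g(s)·(δ(s) + u_k) ds. Then |x_{k+1}| ≤ (δ̄/(δ̄+1))·ε.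 -/
/-!
Put `c = δ̄ε/(δ̄+1)` and `p = g₂τ`. Since `|u_k| ≤ δ̄`, the integrand `g(δ + u_k)` lies between
`g₂(u_k - δ̄) ≤ 0` and `g₂(u_k + δ̄) ≥ 0`, so `x_{k+1} - x_k` lies between `p(u_k - δ̄)` and
`p(u_k + δ̄)`. As `barrierControl` (the paper's `κ`) is odd, take `0 ≤ x_k ≤ c`. Then
`ε - x_k ≥ ε/(δ̄+1) ≥ p(δ̄+1)`, so `q = p/(ε - x_k)` satisfies `q(δ̄+1) ≤ 1`, and
`x_k + p(u_k + δ̄) = x_k + q(δ̄+1)(c - x_k) ≤ c`, `x_k + p(u_k - δ̄) = (1 - q)x_k - pδ̄ ≥ -c`.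
-/

open MeasureTheory intervalIntegral Set

theorem mul_mem_Icc_of_mem_Icc_of_nonpos_of_nonneg {g G y lo hi : ℝ} (hg : g ∈ Icc 0 G)
    (hy : y ∈ Icc lo hi) (hlo : lo ≤ 0) (hhi : 0 ≤ hi) : g * y ∈ Icc (G * lo) (G * hi) := by
  obtain ⟨hg0, hgG⟩ := hg
  obtain ⟨hly, hyh⟩ := hy
  constructor <;> nlinarith

theorem intervalIntegral_mem_Icc_of_mem_Icc {f : ℝ → ℝ} {a b lo hi : ℝ} (hab : a ≤ b)
    (hlo : lo ≤ 0) (hhi : 0 ≤ hi) (hf : ∀ s ∈ Icc a b, f s ∈ Icc lo hi) :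
    ∫ s in a..b, f s ∈ Icc ((b - a) * lo) ((b - a) * hi) := by
  by_cases hint : IntervalIntegrable f volume a b
  · constructor
    · simpa [mul_comm] using
        integral_mono_on hab intervalIntegrable_const hint fun s hs => (hf s hs).1
    · simpa [mul_comm] using
        integral_mono_on hab hint intervalIntegrable_const fun s hs => (hf s hs).2
  · rw [integral_undef hint]
    have hba : 0 ≤ b - a := sub_nonneg.2 hab
    exact ⟨mul_nonpos_of_nonneg_of_nonpos hba hlo, mul_nonneg hba hhi⟩

noncomputable def barrierControl (ε x : ℝ) : ℝ := -x / (ε - |x|)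

theorem barrierControl_neg (ε x : ℝ) : barrierControl ε (-x) = -barrierControl ε x := by
  simp [barrierControl, neg_div]

section
variable {ε δb p x : ℝ}

theorem div_add_one_le_sub_abs (hε : 0 < ε) (hδb : 0 ≤ δb) (hx : |x| ≤ δb / (δb + 1) * ε) :
    ε / (δb + 1) ≤ ε - |x| := by
  have : δb / (δb + 1) * ε = ε - ε / (δb + 1) := by field_simp; ring
  linarith

theorem abs_barrierControl_le (hε : 0 < ε) (hδb : 0 ≤ δb) (hx : |x| ≤ δb / (δb + 1) * ε) :
    |barrierControl ε x| ≤ δb := by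
  have hpos : 0 < ε - |x| :=
    (div_pos hε (by linarith)).trans_le (div_add_one_le_sub_abs hε hδb hx)
  rw [barrierControl, abs_div, abs_neg, abs_of_pos hpos, div_le_iff₀ hpos]
  have : |x| * (δb + 1) ≤ δb * ε := by
    rwa [div_mul_eq_mul_div, le_div_iff₀ (by linarith)] at hx
  linarith

theorem barrierControl_step_bounds_of_nonneg (hε : 0 < ε) (hδb : 0 ≤ δb)
    (hp : p * (δb + 1) ^ 2 ≤ ε) (hx0 : 0 ≤ x) (hx : x ≤ δb / (δb + 1) * ε) :
    -(δb / (δb + 1) * ε) ≤ x + p * (barrierControl ε x - δb) ∧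
      x + p * (barrierControl ε x + δb) ≤ δb / (δb + 1) * ε := by
  have hd1 : 0 < δb + 1 := by linarith
  have habs : |x| = x := abs_of_nonneg hx0
  have hd : ε / (δb + 1) ≤ ε - x := by
    simpa only [habs] using div_add_one_le_sub_abs hε hδb (x := x) (by rwa [habs])
  have hdpos : 0 < ε - x := (div_pos hε hd1).trans_le hd
  have hpd : p * (δb + 1) ≤ ε - x := by
    refine le_trans ?_ hd
    rw [le_div_iff₀ hd1]; linarith
  have hq : p / (ε - x) * (δb + 1) ≤ 1 := by
    rw [div_mul_eq_mul_div, div_le_one hdpos]; linarith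
  set c := δb / (δb + 1) * ε with hc
  have hpδ : p * δb ≤ c := by
    rw [hc, div_mul_eq_mul_div, le_div_iff₀ hd1, mul_right_comm, mul_comm δb ε]
    exact mul_le_mul_of_nonneg_right (by linarith) hδb
  have hu : barrierControl ε x = -x / (ε - x) := by rw [barrierControl, habs]
  constructor
  · have hpu : p * barrierControl ε x = -(p / (ε - x) * x) := by rw [hu]; ring
    have hq1 : p / (ε - x) ≤ 1 := by nlinarith
    linarith [mul_le_of_le_one_left hx0 hq1]
  · have hpu : p * (barrierControl ε x + δb) = p / (ε - x) * (δb + 1) * (c - x) := by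
      rw [hu, hc]; field_simp; ring
    linarith [mul_le_of_le_one_left (sub_nonneg.2 hx) hq]

theorem barrierControl_step_bounds (hε : 0 < ε) (hδb : 0 ≤ δb)
    (hp : p * (δb + 1) ^ 2 ≤ ε) (hx : |x| ≤ δb / (δb + 1) * ε) :
    -(δb / (δb + 1) * ε) ≤ x + p * (barrierControl ε x - δb) ∧
      x + p * (barrierControl ε x + δb) ≤ δb / (δb + 1) * ε := by
  rcases le_total 0 x with hx0 | hx0
  · exact barrierControl_step_bounds_of_nonneg hε hδb hp hx0 ((le_abs_self x).trans hx)
  · obtain ⟨hlo, hhi⟩ := barrierControl_step_bounds_of_nonneg hε hδb hp (neg_nonneg.2 hx0)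
      ((neg_le_abs x).trans hx)
    rw [barrierControl_neg] at hlo hhi
    constructor <;> linarith

end

theorem stmt_9_general (ε g₁ g₂ δb τ tk tk1 xk uk xk1 : ℝ)
    (hε : 0 < ε) (hg₁ : 0 < g₁) (hg₁₂ : g₁ ≤ g₂)
    (hδb : 0 < δb)
    (hsamp : g₂ * τ ≤ ε / (δb + 1) ^ 2)
    (ht : tk < tk1) (hτ' : tk1 - tk = τ)
    (g δ : ℝ → ℝ)
    (hg_bd : ∀ s ∈ Set.Icc tk tk1, g₁ ≤ g s ∧ g s ≤ g₂)
    (hδ_bd : ∀ s ∈ Set.Icc tk tk1, |δ s| ≤ δb)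
    (hxk : |xk| ≤ (δb / (δb + 1)) * ε)
    (huk : uk = -xk / (ε - |xk|))
    (hxk1 : xk1 = xk + ∫ s in tk..tk1, g s * (δ s + uk)) :
    |xk1| ≤ (δb / (δb + 1)) * ε := by
  replace huk : uk = barrierControl ε xk := huk
  have hg₂ : 0 ≤ g₂ := hg₁.le.trans hg₁₂
  obtain ⟨hu_lo, hu_hi⟩ := abs_le.1 (huk ▸ abs_barrierControl_le hε hδb.le hxk)
  have hI : ∫ s in tk..tk1, g s * (δ s + uk) ∈
      Icc ((tk1 - tk) * (g₂ * (uk - δb))) ((tk1 - tk) * (g₂ * (uk + δb))) :=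
    intervalIntegral_mem_Icc_of_mem_Icc ht.le
      (mul_nonpos_of_nonneg_of_nonpos hg₂ (by linarith)) (mul_nonneg hg₂ (by linarith))
      fun s hs => mul_mem_Icc_of_mem_Icc_of_nonpos_of_nonneg
        ⟨hg₁.le.trans (hg_bd s hs).1, (hg_bd s hs).2⟩
        (by constructor <;> linarith [abs_le.1 (hδ_bd s hs)]) (by linarith) (by linarith)
  obtain ⟨hlo, hhi⟩ := barrierControl_step_bounds (p := g₂ * τ) hε hδb.le
    ((le_div_iff₀ (by positivity)).1 hsamp) hxk
  rw [hτ'] at hI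
  rw [← huk] at hlo hhi
  rw [hxk1, abs_le]
  constructor <;> linarith [hI.1, hI.2]

/-- Case 2 of Proposition 2: the final set
Div 4 = {x : |x| ≤ (δ̄/(δ̄+1))ε} is positively invariant in one sampling step,
provided `g₂τ ≤ ε/(δ̄+1)²`. -/
theorem stmt_9 (ε g₁ g₂ δb τ tk tk1 xk uk xk1 : ℝ)
    (hε : 0 < ε) (hg₁ : 0 < g₁) (hg₁₂ : g₁ ≤ g₂)
    (hδb : 0 < δb) (hτ : 0 < τ)
    (hsamp : g₂ * τ ≤ ε / (δb + 1) ^ 2)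
    (ht : tk < tk1) (hτ' : tk1 - tk = τ)
    (g δ : ℝ → ℝ)
    (hg_int : IntervalIntegrable g volume tk tk1)
    (hδ_int : IntervalIntegrable δ volume tk tk1)
    (hg_bd : ∀ s ∈ Set.Icc tk tk1, g₁ ≤ g s ∧ g s ≤ g₂)
    (hδ_bd : ∀ s ∈ Set.Icc tk tk1, |δ s| ≤ δb)
    (hxk : |xk| ≤ (δb / (δb + 1)) * ε)
    (huk : uk = -xk / (ε - |xk|))
    (hxk1 : xk1 = xk + ∫ s in tk..tk1, g s * (δ s + uk)) :
    |xk1| ≤ (δb / (δb + 1)) * ε :=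
  stmt_9_general ε g₁ g₂ δb τ tk tk1 xk uk xk1 hε hg₁ hg₁₂ hδb hsamp ht hτ' g δ hg_bd hδ_bd hxk huk
    hxk1
end

section
/- Let ε > 0, 0 < g₁ ≤ g₂, 0 < δ̄ ≤ c₁, τ > 0 with g₂·τ ≤ ε/(c₁ + 1)². Let t_k = t₀ + k·τ for k ∈ ℕ, let g, δ : ℝ → ℝ be integrable on every bounded interval with g₁ ≤ g(s) ≤ g₂ and |δ(s)| ≤ δ̄ for all s ≥ t₀. Define recursively u_k = −x_k/(ε − |x_k|) and x_{k+1} = x_k + ∫_{t_k}^{t_{k+1}} g(s)·(δ(s) + u_k) ds. If |x₀| ≤ (c₁/(c₁+1))·ε, then for every k ∈ ℕ, |x_k| ≤ (c₁/(c₁+1))·ε; moreover, if |x_k| ≤ (δ̄/(δ̄+1))·ε for some k, then |x_j| ≤ (δ̄/(δ̄+1))·ε for all j ≥ k. -/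
open MeasureTheory intervalIntegral

/-!
Over one sampling interval the update is `x ↦ (1 - I / (ε - |x|)) x + J` with `I = ∫ g ∈ [0, g₂ τ]`
and `|J| ≤ δ̄ I`. For a level `c ≥ δ̄` with `g₂ τ ≤ ε / (c + 1)²` and `|x| ≤ c ε / (c + 1)`, the
factor `1 - I / (ε - |x|)` is nonnegative and
`(1 - I / (ε - |x|)) |x| + c I = |x| + θ (c ε / (c + 1) - |x|)` with `θ = I (c + 1) / (ε - |x|) ≤ 1`,
so `|x| ≤ c ε / (c + 1)` persists. The two claims are the cases `c = c₁` and `c = δ̄`.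
-/

theorem barrier_contraction_le {ε c r I : ℝ} (hε : 0 < ε) (hc : 0 ≤ c)
    (hr : r ≤ c / (c + 1) * ε) (hI0 : 0 ≤ I) (hI : I ≤ ε / (c + 1) ^ 2) :
    0 ≤ 1 - I / (ε - r) ∧ (1 - I / (ε - r)) * r + c * I ≤ c / (c + 1) * ε := by
  have hc1 : 0 < c + 1 := by linarith
  have hgap : ε / (c + 1) ≤ ε - r := by
    have : c / (c + 1) * ε + ε / (c + 1) = ε := by field_simp
    linarith
  have hεr : 0 < ε - r := (div_pos hε hc1).trans_le hgap
  set θ := I * (c + 1) / (ε - r) with hθ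
  have hθ1 : θ ≤ 1 := by
    rw [div_le_one hεr]
    calc I * (c + 1) ≤ ε / (c + 1) ^ 2 * (c + 1) := by gcongr
      _ = ε / (c + 1) := by field_simp
      _ ≤ ε - r := hgap
  have hθ0 : 0 ≤ θ := by positivity
  have hmove : (1 - I / (ε - r)) * r + c * I = r + θ * (c / (c + 1) * ε - r) := by
    rw [hθ]; field_simp; ring
  refine ⟨?_, ?_⟩
  · have : I / (ε - r) ≤ θ :=
      div_le_div_of_nonneg_right (le_mul_of_one_le_right hI0 (by linarith)) hεr.le
    linarith
  · rw [hmove]; nlinarith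

theorem abs_barrier_step_le {ε c δb x x' I : ℝ} (hε : 0 < ε) (hc : 0 ≤ c) (hδc : δb ≤ c)
    (hx : |x| ≤ c / (c + 1) * ε) (hI0 : 0 ≤ I) (hI : I ≤ ε / (c + 1) ^ 2)
    (hx' : |x' - (x + -x / (ε - |x|) * I)| ≤ δb * I) : |x'| ≤ c / (c + 1) * ε := by
  obtain ⟨hfactor, hcontr⟩ := barrier_contraction_le hε hc hx hI0 hI
  have hnominal : x + -x / (ε - |x|) * I = (1 - I / (ε - |x|)) * x := by ring
  calc |x'| ≤ |(1 - I / (ε - |x|)) * x| + δb * I := by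
        rw [← hnominal]; linarith [abs_sub_abs_le_abs_sub x' (x + -x / (ε - |x|) * I)]
    _ ≤ (1 - I / (ε - |x|)) * |x| + c * I := by
        rw [abs_mul, abs_of_nonneg hfactor]; gcongr
    _ ≤ c / (c + 1) * ε := hcontr

theorem abs_integral_mul_add_sub_le {g δ : ℝ → ℝ} {a b δb : ℝ} (u : ℝ) (hab : a ≤ b)
    (hg : IntervalIntegrable g volume a b) (hδ : IntervalIntegrable δ volume a b)
    (hg0 : ∀ s ∈ Set.Icc a b, 0 ≤ g s) (hδ_bd : ∀ s ∈ Set.Icc a b, |δ s| ≤ δb) :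
    |(∫ s in a..b, g s * (δ s + u)) - u * ∫ s in a..b, g s| ≤ δb * ∫ s in a..b, g s := by
  have hgδ : IntervalIntegrable (fun s => g s * δ s) volume a b := by
    rw [intervalIntegrable_iff_integrableOn_Ioc_of_le hab] at hg hδ ⊢
    refine hg.mul_bdd (c := δb) hδ.aestronglyMeasurable ?_
    filter_upwards [ae_restrict_mem measurableSet_Ioc] with s hs
    exact hδ_bd s (Set.Ioc_subset_Icc_self hs)
  have hsplit : (∫ s in a..b, g s * (δ s + u)) - u * ∫ s in a..b, g s
      = ∫ s in a..b, g s * δ s := by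
    simp only [mul_add, integral_add hgδ (hg.mul_const u), intervalIntegral.integral_mul_const]
    ring
  rw [hsplit, ← intervalIntegral.integral_const_mul, ← Real.norm_eq_abs]
  refine norm_integral_le_of_norm_le hab (Filter.Eventually.of_forall fun s hs => ?_)
    (hg.const_mul δb)
  have hs' := Set.Ioc_subset_Icc_self hs
  rw [Real.norm_eq_abs, abs_mul, abs_of_nonneg (hg0 s hs'), mul_comm]
  exact mul_le_mul_of_nonneg_right (hδ_bd s hs') (hg0 s hs')

theorem abs_sampled_step_le {ε c δb g₂ a b x : ℝ} {g δ : ℝ → ℝ} (hε : 0 < ε) (hc : 0 ≤ c)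
    (hδc : δb ≤ c) (hab : a ≤ b) (hg : IntervalIntegrable g volume a b)
    (hδ : IntervalIntegrable δ volume a b) (hg_bd : ∀ s ∈ Set.Icc a b, 0 ≤ g s ∧ g s ≤ g₂)
    (hδ_bd : ∀ s ∈ Set.Icc a b, |δ s| ≤ δb) (hsamp : g₂ * (b - a) ≤ ε / (c + 1) ^ 2)
    (hx : |x| ≤ c / (c + 1) * ε) :
    |x + ∫ s in a..b, g s * (δ s + -x / (ε - |x|))| ≤ c / (c + 1) * ε := by
  have hg0 : ∀ s ∈ Set.Icc a b, 0 ≤ g s := fun s hs => (hg_bd s hs).1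
  have hI : ∫ s in a..b, g s ≤ g₂ * (b - a) := by
    simpa [mul_comm] using integral_mono_on hab hg intervalIntegrable_const
      fun s hs => (hg_bd s hs).2
  refine abs_barrier_step_le hε hc hδc hx (integral_nonneg hab hg0) (hI.trans hsamp) ?_
  simpa only [add_sub_add_left_eq_sub] using
    abs_integral_mul_add_sub_le (-x / (ε - |x|)) hab hg hδ hg0 hδ_bd

theorem stmt_10_general (ε g₁ g₂ δb c₁ τ t₀ : ℝ)
    (hε : 0 < ε) (hg₁ : 0 < g₁)
    (hδb : 0 < δb) (hδc : δb ≤ c₁) (hτ : 0 < τ)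
    (hsamp : g₂ * τ ≤ ε / (c₁ + 1) ^ 2)
    (g δ : ℝ → ℝ)
    (hg_int : ∀ a b : ℝ, IntervalIntegrable g volume a b)
    (hδ_int : ∀ a b : ℝ, IntervalIntegrable δ volume a b)
    (hg_bd : ∀ s : ℝ, t₀ ≤ s → g₁ ≤ g s ∧ g s ≤ g₂)
    (hδ_bd : ∀ s : ℝ, t₀ ≤ s → |δ s| ≤ δb)
    (x u : ℕ → ℝ)
    (hu : ∀ k, u k = -(x k) / (ε - |x k|))
    (hx : ∀ k : ℕ, x (k + 1) =
      x k + ∫ s in (t₀ + (k : ℝ) * τ)..(t₀ + ((k : ℝ) + 1) * τ), g s * (δ s + u k))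
    (hx₀ : |x 0| ≤ (c₁ / (c₁ + 1)) * ε) :
    (∀ k : ℕ, |x k| ≤ (c₁ / (c₁ + 1)) * ε) ∧
    (∀ k : ℕ, |x k| ≤ (δb / (δb + 1)) * ε →
      ∀ j : ℕ, k ≤ j → |x j| ≤ (δb / (δb + 1)) * ε) := by
  have step : ∀ c, δb ≤ c → c ≤ c₁ → ∀ k : ℕ,
      |x k| ≤ c / (c + 1) * ε → |x (k + 1)| ≤ c / (c + 1) * ε := by
    intro c hδc' hcc₁ k hxk
    have hc : 0 ≤ c := hδb.le.trans hδc'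
    have hstart : t₀ ≤ t₀ + (k : ℝ) * τ := le_add_of_nonneg_right (by positivity)
    have hlen : t₀ + ((k : ℝ) + 1) * τ - (t₀ + k * τ) = τ := by ring
    rw [hx k, hu k]
    refine abs_sampled_step_le (g₂ := g₂) hε hc hδc' (by nlinarith) (hg_int _ _) (hδ_int _ _)
      (fun s hs => ?_) (fun s hs => hδ_bd s (hstart.trans hs.1)) ?_ hxk
    · obtain ⟨hg₁s, hg₂s⟩ := hg_bd s (hstart.trans hs.1)
      exact ⟨hg₁.le.trans hg₁s, hg₂s⟩
    · rw [hlen]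
      exact hsamp.trans (div_le_div_of_nonneg_left hε.le (by positivity) (by gcongr))
  refine ⟨fun k => ?_, fun k hk j hkj => ?_⟩
  · induction k with
    | zero => exact hx₀
    | succ k ih => exact step c₁ hδc le_rfl k ih
  · induction j, hkj using Nat.le_induction with
    | base => exact hk
    | succ j _ ih => exact step δb le_rfl hδc j ih

/-- invariance part of Proposition 2: under the sampling restriction
`g₂τ ≤ ε/(c₁+1)²`, the sampled barrier-function closed loop keeps the trajectory in
Div 3 ∪ Div 4 = {x : |x| ≤ (c₁/(c₁+1))ε}; moreover Div 4 = {x : |x| ≤ (δ̄/(δ̄+1))ε}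
is positively invariant. -/
theorem stmt_10 (ε g₁ g₂ δb c₁ τ t₀ : ℝ)
    (hε : 0 < ε) (hg₁ : 0 < g₁) (hg₁₂ : g₁ ≤ g₂)
    (hδb : 0 < δb) (hδc : δb ≤ c₁) (hτ : 0 < τ)
    (hsamp : g₂ * τ ≤ ε / (c₁ + 1) ^ 2)
    (g δ : ℝ → ℝ)
    (hg_int : ∀ a b : ℝ, IntervalIntegrable g volume a b)
    (hδ_int : ∀ a b : ℝ, IntervalIntegrable δ volume a b)
    (hg_bd : ∀ s : ℝ, t₀ ≤ s → g₁ ≤ g s ∧ g s ≤ g₂)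
    (hδ_bd : ∀ s : ℝ, t₀ ≤ s → |δ s| ≤ δb)
    (x u : ℕ → ℝ)
    (hu : ∀ k, u k = -(x k) / (ε - |x k|))
    (hx : ∀ k : ℕ, x (k + 1) =
      x k + ∫ s in (t₀ + (k : ℝ) * τ)..(t₀ + ((k : ℝ) + 1) * τ), g s * (δ s + u k))
    (hx₀ : |x 0| ≤ (c₁ / (c₁ + 1)) * ε) :
    (∀ k : ℕ, |x k| ≤ (c₁ / (c₁ + 1)) * ε) ∧
    (∀ k : ℕ, |x k| ≤ (δb / (δb + 1)) * ε →
      ∀ j : ℕ, k ≤ j → |x j| ≤ (δb / (δb + 1)) * ε) :=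
  stmt_10_general ε g₁ g₂ δb c₁ τ t₀ hε hg₁ hδb hδc hτ hsamp g δ hg_int hδ_int hg_bd hδ_bd x u hu hx
    hx₀
end

section
/- Let ε > 0, 0 < g₁ ≤ g₂, 0 < δ̄ ≤ c₁, τ > 0 with g₂·τ ≤ ε/(c₁ + 1)². Let t_k = t₀ + k·τ, let g, δ : ℝ → ℝ be integrable on every bounded interval with g₁ ≤ g(s) ≤ g₂ and |δ(s)| ≤ δ̄ for all s ≥ t₀. Define recursively u_k = −x_k/(ε − |x_k|) and x_{k+1} = x_k + ∫_{t_k}^{t_{k+1}} g(s)·(δ(s) + u_k) ds. If |x₀| ≤ (c₁/(c₁+1))·ε, then limsup_{k→∞} |x_k| ≤ (δ̄/(δ̄+1))·ε. -/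
open MeasureTheory intervalIntegral Filter

/-- Absorption/invariance algebra: if `a ≤ c/(c+1)·ε` and `0 ≤ G ≤ ε/(c+1)²`,
then one barrier step stays below `c/(c+1)·ε`. -/
lemma aux_absorb (ε δb c G a : ℝ) (hε : 0 < ε) (hδb : 0 < δb) (hδc : δb ≤ c)
    (hG0 : 0 ≤ G) (hG : G ≤ ε / (c + 1) ^ 2) (ha0 : 0 ≤ a) (haM : a ≤ c / (c + 1) * ε) :
    a + G * (δb - a / (ε - a)) ≤ c / (c + 1) * ε := by
  have hc : 0 < c := lt_of_lt_of_le hδb hδc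
  have hc1 : (0:ℝ) < c + 1 := by linarith
  have hMe : c / (c + 1) * ε = ε - ε / (c + 1) := by field_simp; ring
  have hea : ε / (c + 1) ≤ ε - a := by
    rw [hMe] at haM; linarith
  have heap : 0 < ε - a := lt_of_lt_of_le (by positivity) hea
  have hN : 0 ≤ c * ε - (c + 1) * a := by
    have := haM
    rw [div_mul_eq_mul_div, le_div_iff₀ hc1] at this
    linarith
  have h1 : δb - a / (ε - a) ≤ (c * ε - (c + 1) * a) / (ε - a) := by
    have : c - a / (ε - a) = (c * ε - (c + 1) * a) / (ε - a) := by
      field_simp; ring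
    linarith [this ▸ (by linarith [hδc] : δb - a / (ε - a) ≤ c - a / (ε - a))]
  have h2 : G * (δb - a / (ε - a)) ≤ G * ((c * ε - (c + 1) * a) / (ε - a)) :=
    mul_le_mul_of_nonneg_left h1 hG0
  have h3 : G * ((c * ε - (c + 1) * a) / (ε - a)) ≤ (c * ε - (c + 1) * a) / (c + 1) := by
    rw [mul_div_assoc', div_le_div_iff₀ heap hc1]
    have hG' : G * (c + 1) ^ 2 ≤ ε := (le_div_iff₀ (by positivity)).mp hG
    have hGc : G * (c + 1) ≤ ε - a := by
      have h4 : G * (c + 1) ≤ ε / (c + 1) := by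
        rw [le_div_iff₀ hc1]; nlinarith
      linarith
    nlinarith
  have h5 : a + (c * ε - (c + 1) * a) / (c + 1) = c / (c + 1) * ε := by
    field_simp; ring
  linarith

/-- monotonicity of `a ↦ a/(ε - a)` on `[0, ε)`. -/
lemma aux_mono (ε a b : ℝ) (hb : 0 ≤ b) (hba : b ≤ a) (ha : a < ε) :
    b / (ε - b) ≤ a / (ε - a) := by
  have h1 : 0 < ε - a := by linarith
  have h2 : 0 < ε - b := by linarith
  rw [div_le_div_iff₀ h2 h1]
  nlinarith

set_option maxHeartbeats 1000000 in
/-- attractiveness part of Proposition 2: under the sampling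
restriction `g₂τ ≤ ε/(c₁+1)²`, starting from the non-saturating region, the sampled
barrier-function closed loop satisfies `limsup |x_k| ≤ (δ̄/(δ̄+1))ε`. -/
theorem stmt_11 (ε g₁ g₂ δb c₁ τ t₀ : ℝ)
    (hε : 0 < ε) (hg₁ : 0 < g₁) (hg₁₂ : g₁ ≤ g₂)
    (hδb : 0 < δb) (hδc : δb ≤ c₁) (hτ : 0 < τ)
    (hsamp : g₂ * τ ≤ ε / (c₁ + 1) ^ 2)
    (g δ : ℝ → ℝ)
    (hg_int : ∀ a b : ℝ, IntervalIntegrable g volume a b)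
    (hδ_int : ∀ a b : ℝ, IntervalIntegrable δ volume a b)
    (hg_bd : ∀ s : ℝ, t₀ ≤ s → g₁ ≤ g s ∧ g s ≤ g₂)
    (hδ_bd : ∀ s : ℝ, t₀ ≤ s → |δ s| ≤ δb)
    (x u : ℕ → ℝ)
    (hu : ∀ k, u k = -(x k) / (ε - |x k|))
    (hx : ∀ k : ℕ, x (k + 1) =
      x k + ∫ s in (t₀ + (k : ℝ) * τ)..(t₀ + ((k : ℝ) + 1) * τ), g s * (δ s + u k))
    (hx₀ : |x 0| ≤ (c₁ / (c₁ + 1)) * ε) :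
    limsup (fun k : ℕ => |x k|) atTop ≤ (δb / (δb + 1)) * ε := by
  have hc₁ : 0 < c₁ := lt_of_lt_of_le hδb hδc
  have hc1 : (0:ℝ) < c₁ + 1 := by linarith
  have hd1 : (0:ℝ) < δb + 1 := by linarith
  set M : ℝ := c₁ / (c₁ + 1) * ε with hM_def
  set A : ℝ := δb / (δb + 1) * ε with hA_def
  have hA0 : 0 < A := by positivity
  have hAM : A ≤ M := by
    rw [hA_def, hM_def]
    apply mul_le_mul_of_nonneg_right _ hε.le
    rw [div_le_div_iff₀ hd1 hc1]; nlinarith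
  have hMε : M < ε := by
    rw [hM_def]
    have : c₁ / (c₁ + 1) < 1 := by rw [div_lt_one hc1]; linarith
    nlinarith
  have hMe : M = ε - ε / (c₁ + 1) := by rw [hM_def]; field_simp; ring
  -- the one-step estimate
  have hstep : ∀ k : ℕ, |x k| ≤ M → ∃ G : ℝ, g₁ * τ ≤ G ∧ G ≤ g₂ * τ ∧
      |x (k + 1)| ≤ |x k| + G * (δb - |x k| / (ε - |x k|)) := by
    intro k hk
    set t1 : ℝ := t₀ + (k : ℝ) * τ with ht1
    set t2 : ℝ := t₀ + ((k : ℝ) + 1) * τ with ht2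
    have h12 : t1 ≤ t2 := by rw [ht1, ht2]; nlinarith
    have ht0 : t₀ ≤ t1 := by
      have hkτ : (0:ℝ) ≤ (k : ℝ) * τ := by positivity
      rw [ht1]; linarith
    have hmem : ∀ s ∈ Set.Icc t1 t2, t₀ ≤ s := fun s hs => le_trans ht0 hs.1
    have hmemI : ∀ s ∈ Set.uIoc t1 t2, t₀ ≤ s := by
      intro s hs
      rw [Set.uIoc_of_le h12] at hs
      exact le_trans ht0 hs.1.le
    set G : ℝ := ∫ s in t1..t2, g s with hG_def
    have ht21 : t2 - t1 = τ := by rw [ht1, ht2]; ring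
    -- integrability facts
    have hInt_g := hg_int t1 t2
    have hInt_cmp : IntervalIntegrable (fun s => g₂ * |δ s|) volume t1 t2 :=
      ((hδ_int t1 t2).abs).const_mul g₂
    have hInt_gδ : IntervalIntegrable (fun s => g s * δ s) volume t1 t2 := by
      apply hInt_cmp.mono_fun
      · exact (hInt_g.1.aestronglyMeasurable.mono_set
          (by rw [Set.uIoc_of_le h12])).mul
          ((hδ_int t1 t2).1.aestronglyMeasurable.mono_set (by rw [Set.uIoc_of_le h12]))
      · apply (ae_restrict_iff' measurableSet_uIoc).2
        apply ae_of_all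
        intro s hs
        have hb := hg_bd s (hmemI s hs)
        have hd := hδ_bd s (hmemI s hs)
        have hg0 : 0 ≤ g s := le_trans hg₁.le hb.1
        simp only [Real.norm_eq_abs, abs_mul, abs_abs]
        have hg2 : 0 ≤ g₂ := le_trans hg₁.le hg₁₂
        rw [abs_of_nonneg hg0, abs_of_nonneg hg2]
        exact mul_le_mul hb.2 le_rfl (abs_nonneg _) hg2
    have hInt_ug : IntervalIntegrable (fun s => u k * g s) volume t1 t2 :=
      hInt_g.const_mul (u k)
    -- split the integral
    have hsplit : (∫ s in t1..t2, g s * (δ s + u k))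
        = (∫ s in t1..t2, g s * δ s) + u k * G := by
      have hfe : (fun s => g s * (δ s + u k)) = fun s => g s * δ s + u k * g s := by
        funext s; ring
      rw [hfe, intervalIntegral.integral_add hInt_gδ hInt_ug,
        intervalIntegral.integral_const_mul]
    -- bounds on G
    have hG1 : g₁ * τ ≤ G := by
      have h := intervalIntegral.integral_mono_on h12 (_root_.intervalIntegrable_const (c := g₁))
        hInt_g (fun s hs => (hg_bd s (hmem s hs)).1)
      rw [intervalIntegral.integral_const, ht21, smul_eq_mul, mul_comm] at h
      exact h
    have hG2 : G ≤ g₂ * τ := by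
      have h := intervalIntegral.integral_mono_on h12 hInt_g
        (_root_.intervalIntegrable_const (c := g₂)) (fun s hs => (hg_bd s (hmem s hs)).2)
      rw [intervalIntegral.integral_const, ht21, smul_eq_mul, mul_comm] at h
      exact h
    have hG0 : 0 ≤ G := le_trans (by positivity) hG1
    -- bound on the disturbance integral
    have hD : |∫ s in t1..t2, g s * δ s| ≤ δb * G := by
      have h1 := intervalIntegral.abs_integral_le_integral_abs (μ := volume)
        (f := fun s => g s * δ s) h12
      have h2 : (∫ s in t1..t2, |g s * δ s|) ≤ ∫ s in t1..t2, δb * g s := by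
        apply intervalIntegral.integral_mono_on h12 hInt_gδ.abs (hInt_g.const_mul δb)
        intro s hs
        have hb := hg_bd s (hmem s hs)
        have hd := hδ_bd s (hmem s hs)
        have hg0 : 0 ≤ g s := le_trans hg₁.le hb.1
        rw [abs_mul, abs_of_nonneg hg0, mul_comm δb (g s)]
        exact mul_le_mul_of_nonneg_left hd hg0
      rw [intervalIntegral.integral_const_mul] at h2
      exact le_trans h1 h2
    -- the pointwise estimate
    refine ⟨G, hG1, hG2, ?_⟩
    have hea : ε / (c₁ + 1) ≤ ε - |x k| := by rw [hMe] at hk; linarith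
    have heap : 0 < ε - |x k| := lt_of_lt_of_le (by positivity) hea
    have hGsmall : G ≤ ε - |x k| := by
      have h4 : ε / (c₁ + 1) ^ 2 ≤ ε / (c₁ + 1) := by
        apply div_le_div_of_nonneg_left hε.le hc1
        nlinarith
      linarith [le_trans hG2 hsamp]
    have hcoef0 : 0 ≤ 1 - G / (ε - |x k|) := by
      rw [sub_nonneg, div_le_one heap]; exact hGsmall
    have hxk1 : x (k + 1) = x k * (1 - G / (ε - |x k|)) + ∫ s in t1..t2, g s * δ s := by
      rw [hx k, hsplit, hu k]
      field_simp
      ring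
    calc |x (k + 1)| ≤ |x k * (1 - G / (ε - |x k|))| + |∫ s in t1..t2, g s * δ s| := by
          rw [hxk1]; exact abs_add_le _ _
      _ ≤ |x k| * (1 - G / (ε - |x k|)) + δb * G := by
          rw [abs_mul, abs_of_nonneg hcoef0]
          exact add_le_add le_rfl hD
      _ = |x k| + G * (δb - |x k| / (ε - |x k|)) := by ring
  -- invariance of the non-saturating region
  have hMinv : ∀ k : ℕ, |x k| ≤ M := by
    intro k
    induction k with
    | zero => exact hx₀
    | succ k ih =>
      obtain ⟨G, h1, h2, h3⟩ := hstep k ih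
      have hG0 : 0 ≤ G := le_trans (by positivity) h1
      have := aux_absorb ε δb c₁ G (|x k|) hε hδb hδc hG0
        (le_trans h2 hsamp) (abs_nonneg _) ih
      linarith
  -- absorption into A
  have hGA : ∀ G : ℝ, G ≤ g₂ * τ → G ≤ ε / (δb + 1) ^ 2 := by
    intro G hG
    have h4 : ε / (c₁ + 1) ^ 2 ≤ ε / (δb + 1) ^ 2 := by
      apply div_le_div_of_nonneg_left hε.le (by positivity)
      nlinarith
    linarith [le_trans hG hsamp]
  have habs : ∀ k : ℕ, |x k| ≤ A → |x (k + 1)| ≤ A := by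
    intro k hk
    obtain ⟨G, h1, h2, h3⟩ := hstep k (le_trans hk hAM)
    have hG0 : 0 ≤ G := le_trans (by positivity) h1
    have := aux_absorb ε δb δb G (|x k|) hε hδb le_rfl hG0
      (hGA G h2) (abs_nonneg _) hk
    linarith
  have hfA : A / (ε - A) = δb := by
    have hAe : ε - A = ε / (δb + 1) := by rw [hA_def]; field_simp; ring
    rw [hAe, hA_def]
    field_simp
  -- main limsup argument
  have hbdd : IsCoboundedUnder (· ≤ ·) atTop (fun k : ℕ => |x k|) :=
    IsBoundedUnder.isCoboundedUnder_le
      ⟨0, Filter.eventually_map.mpr (Filter.Eventually.of_forall fun k => abs_nonneg (x k))⟩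
  apply le_of_forall_pos_le_add
  intro η hη
  rcases lt_or_ge M (A + η) with hcase | hcase
  · exact limsup_le_of_le hbdd (Filter.Eventually.of_forall fun k => le_trans (hMinv k) hcase.le)
  · -- A + η ≤ M
    have hAηε : A + η < ε := lt_of_le_of_lt hcase hMε
    set ρ : ℝ := (A + η) / (ε - (A + η)) - δb with hρ_def
    clear_value ρ
    have hρ : 0 < ρ := by
      rw [hρ_def, sub_pos, lt_div_iff₀ (by linarith : (0:ℝ) < ε - (A + η))]
      have hAd : A * (δb + 1) = δb * ε := by rw [hA_def]; field_simp
      nlinarith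
    -- decrease step
    have hdec : ∀ k : ℕ, A + η ≤ |x k| → |x (k + 1)| ≤ |x k| - g₁ * τ * ρ := by
      intro k hk
      obtain ⟨G, h1, h2, h3⟩ := hstep k (hMinv k)
      have hmono := aux_mono ε (|x k|) (A + η) (by positivity) hk
        (lt_of_le_of_lt (hMinv k) hMε)
      have hv : δb - |x k| / (ε - |x k|) ≤ -ρ := by
        rw [hρ_def]; linarith
      have hv0 : δb - |x k| / (ε - |x k|) ≤ 0 := le_trans hv (by linarith)
      have h4 : G * (δb - |x k| / (ε - |x k|)) ≤ g₁ * τ * (δb - |x k| / (ε - |x k|)) :=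
        mul_le_mul_of_nonpos_right h1 hv0
      have h5 : g₁ * τ * (δb - |x k| / (ε - |x k|)) ≤ g₁ * τ * (-ρ) :=
        mul_le_mul_of_nonneg_left hv (le_of_lt (mul_pos hg₁ hτ))
      have h6 : g₁ * τ * (-ρ) = -(g₁ * τ * ρ) := by ring
      linarith
    -- reach the region |x| ≤ A + η
    have hreach : ∃ N : ℕ, |x N| ≤ A + η := by
      by_contra hcon
      push_neg at hcon
      have hiter : ∀ k : ℕ, |x k| ≤ |x 0| - (k : ℝ) * (g₁ * τ * ρ) := by
        intro k
        induction k with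
        | zero => simp
        | succ k ih =>
          have := hdec k (hcon k).le
          push_cast
          linarith
      obtain ⟨k, hk⟩ := exists_nat_gt (|x 0| / (g₁ * τ * ρ))
      have hc : 0 < g₁ * τ * ρ := mul_pos (mul_pos hg₁ hτ) hρ
      have : |x 0| < (k : ℝ) * (g₁ * τ * ρ) := by
        rw [div_lt_iff₀ hc] at hk; linarith
      have := hiter k
      have := abs_nonneg (x k)
      linarith
    -- persistence
    obtain ⟨N, hN⟩ := hreach
    have hpers : ∀ k, N ≤ k → |x k| ≤ A + η := by
      intro k hk
      induction k, hk using Nat.le_induction with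
      | base => exact hN
      | succ k hk ih =>
        rcases le_or_gt (|x k|) A with h | h
        · exact le_trans (habs k h) (by linarith)
        · obtain ⟨G, h1, h2, h3⟩ := hstep k (hMinv k)
          have hG0 : 0 ≤ G := le_trans (by positivity) h1
          have hmono := aux_mono ε (|x k|) A hA0.le h.le
            (lt_of_le_of_lt (hMinv k) hMε)
          rw [hfA] at hmono
          have hv0 : δb - |x k| / (ε - |x k|) ≤ 0 := by linarith
          linarith [mul_nonpos_of_nonneg_of_nonpos hG0 hv0]
    exact limsup_le_of_le hbdd (Filter.eventually_atTop.2 ⟨N, hpers⟩)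
end

section
/- Let ε > 0, 0 < g₁ ≤ g₂, 0 < δ̄ ≤ c₁, τ > 0 with g₂·τ ≤ ε/(c₁ + 1)², and let t_k < t_{k+1} with t_{k+1} − t_k = τ. Let g, δ : ℝ → ℝ be integrable on [t_k, t_{k+1}] with g₁ ≤ g(s) ≤ g₂ and |δ(s)| ≤ δ̄. Suppose x_k > (c₁/(c₁+1))·ε, u_k = −c₁ and x_{k+1} = x_k + ∫_{t_k}^{t_{k+1}} g(s)·(δ(s) + u_k) ds. Then x_{k+1} > −(δ̄/(δ̄+1))·ε; in particular, if x_{k+1} ≤ (c₁/(c₁+1))·ε then |x_{k+1}| ≤ (c₁/(c₁+1))·ε. -/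
open MeasureTheory intervalIntegral

set_option maxHeartbeats 1000000 in
/-- no-overshoot claim, proof of Theorem 2: under the sampling
restriction `g₂τ ≤ ε/(c₁+1)²`, a trajectory leaving the saturation region under
`u = -c₁` cannot cross through Div 3 ∪ Div 4 completely in one sampling interval. -/
theorem stmt_13 (ε g₁ g₂ δb c₁ τ tk tk1 xk uk xk1 : ℝ)
    (hε : 0 < ε) (hg₁ : 0 < g₁) (hg₁₂ : g₁ ≤ g₂)
    (hδb : 0 < δb) (hδc : δb ≤ c₁) (hτ : 0 < τ)
    (hsamp : g₂ * τ ≤ ε / (c₁ + 1) ^ 2)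
    (ht : tk < tk1) (hτ' : tk1 - tk = τ)
    (g δ : ℝ → ℝ)
    (hg_int : IntervalIntegrable g volume tk tk1)
    (hδ_int : IntervalIntegrable δ volume tk tk1)
    (hg_bd : ∀ s ∈ Set.Icc tk tk1, g₁ ≤ g s ∧ g s ≤ g₂)
    (hδ_bd : ∀ s ∈ Set.Icc tk tk1, |δ s| ≤ δb)
    (hxk : (c₁ / (c₁ + 1)) * ε < xk)
    (huk : uk = -c₁)
    (hxk1 : xk1 = xk + ∫ s in tk..tk1, g s * (δ s + uk)) :
    -(δb / (δb + 1)) * ε < xk1 ∧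
    (xk1 ≤ (c₁ / (c₁ + 1)) * ε → |xk1| ≤ (c₁ / (c₁ + 1)) * ε) := by
  have hc₁ : 0 < c₁ := lt_of_lt_of_le hδb hδc
  have hkey : ‖∫ s in tk..tk1, g s * (δ s + uk)‖ ≤ (g₂ * (δb + c₁)) * |tk1 - tk| := by
    apply intervalIntegral.norm_integral_le_of_norm_le_const
    intro s hs
    rw [Set.uIoc_of_le ht.le] at hs
    have hsI : s ∈ Set.Icc tk tk1 := ⟨hs.1.le, hs.2⟩
    obtain ⟨h1, h2⟩ := hg_bd s hsI
    have h3 := hδ_bd s hsI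
    have habs : |δ s| ≤ δb := h3
    rw [abs_le] at habs
    have hgpos : 0 ≤ g s := le_trans hg₁.le h1
    rw [Real.norm_eq_abs, abs_mul, abs_of_nonneg hgpos, huk]
    have : |δ s + -c₁| ≤ δb + c₁ := by
      rw [abs_le]; constructor <;> nlinarith
    nlinarith
  rw [Real.norm_eq_abs, abs_le] at hkey
  have habs : |tk1 - tk| = τ := by rw [hτ', abs_of_pos hτ]
  rw [habs] at hkey
  have hI : -(g₂ * (δb + c₁)) * τ ≤ ∫ s in tk..tk1, g s * (δ s + uk) := by
    nlinarith [hkey.1]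
  have hbound : g₂ * τ * (δb + c₁) ≤ ε * (δb + c₁) / (c₁ + 1) ^ 2 := by
    have : 0 < δb + c₁ := by linarith
    rw [div_eq_mul_inv] at hsamp ⊢
    nlinarith [sq_nonneg (c₁ + 1), inv_pos.mpr (pow_pos (by linarith : (0:ℝ) < c₁ + 1) 2)]
  have hc1sq : (0:ℝ) < (c₁ + 1) ^ 2 := pow_pos (by linarith) 2
  have hlow : xk1 > (c₁ / (c₁ + 1)) * ε - ε * (δb + c₁) / (c₁ + 1) ^ 2 := by
    rw [hxk1]; nlinarith
  have hmain : -(δb / (δb + 1)) * ε < xk1 := by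
    have hd1 : (0:ℝ) < δb + 1 := by linarith
    have key : (c₁ / (c₁ + 1)) - (δb + c₁) / (c₁ + 1) ^ 2 + δb / (δb + 1)
        = (c₁^2 - δb^2 + 2*c₁*δb + 2*c₁^2*δb) / ((c₁ + 1) ^ 2 * (δb + 1)) := by
      field_simp
      ring
    have hnum : (0:ℝ) ≤ c₁^2 - δb^2 + 2*c₁*δb + 2*c₁^2*δb := by nlinarith
    have hpos : 0 ≤ (c₁ / (c₁ + 1)) - (δb + c₁) / (c₁ + 1) ^ 2 + δb / (δb + 1) := by
      rw [key]; exact div_nonneg hnum (by positivity)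
    have h := mul_nonneg hε.le hpos
    ring_nf at h hlow ⊢
    linarith
  refine ⟨hmain, fun hup => ?_⟩
  rw [abs_le]
  refine ⟨?_, hup⟩
  have hmono : δb / (δb + 1) ≤ c₁ / (c₁ + 1) := by
    rw [div_le_div_iff₀ (by linarith) (by linarith)]; nlinarith
  linarith [mul_le_mul_of_nonneg_right hmono hε.le]
end

section
/- Let ε > 0, 0 < g₁ ≤ g₂, δ̄ ≥ 0, θ ∈ (0,1), β ∈ (0,1), and set φ = δ̄ + θ and M = max{β, φ/(φ+1)}·ε. Let t₀ ≤ T and let x : ℝ → ℝ be differentiable on [t₀, T] with |x(t)| < ε for all t ∈ [t₀, T], and suppose there exist functions g, δ : ℝ → ℝ with g₁ ≤ g(t) ≤ g₂ and |δ(t)| ≤ δ̄ for all t ∈ [t₀, T], such that x'(t) = g(t)·( δ(t) − x(t)/(ε − |x(t)|) ) for all t ∈ [t₀, T]. If |x(t₀)| ≤ β·ε, then |x(t)| ≤ M for all t ∈ [t₀, T]; in particular |x(t)| < ε on [t₀, T]. -/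
/-- invariance part of Theorem 1, continuous time: for the
closed loop `x' = g(t)(δ(t) - x/(ε - |x|))` with `g₁ ≤ g ≤ g₂`, `|δ| ≤ δ̄`, and
initial condition `|x(t₀)| ≤ βε`, the trajectory satisfies
`|x(t)| ≤ max{β, φ/(φ+1)}·ε` on `[t₀, T]`, where `φ = δ̄ + θ`; in particular
`|x(t)| < ε` there. -/
theorem stmt_16 (ε g₁ g₂ δb θ β φ M t₀ T : ℝ)
    (hε : 0 < ε) (hg₁ : 0 < g₁) (hg₁₂ : g₁ ≤ g₂) (hδb : 0 ≤ δb)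
    (hθ0 : 0 < θ) (hθ1 : θ < 1) (hβ0 : 0 < β) (hβ1 : β < 1)
    (hφ : φ = δb + θ) (hM : M = max β (φ / (φ + 1)) * ε)
    (ht : t₀ ≤ T)
    (x g δ : ℝ → ℝ)
    (hx_lt : ∀ t ∈ Set.Icc t₀ T, |x t| < ε)
    (hg_bd : ∀ t ∈ Set.Icc t₀ T, g₁ ≤ g t ∧ g t ≤ g₂)
    (hδ_bd : ∀ t ∈ Set.Icc t₀ T, |δ t| ≤ δb)
    (hode : ∀ t ∈ Set.Icc t₀ T,
      HasDerivAt x (g t * (δ t - x t / (ε - |x t|))) t)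
    (hx₀ : |x t₀| ≤ β * ε) :
    (∀ t ∈ Set.Icc t₀ T, |x t| ≤ M) ∧ (∀ t ∈ Set.Icc t₀ T, |x t| < ε) := by
  have hφpos : 0 < φ := by rw [hφ]; linarith
  have hmax0 : 0 < max β (φ / (φ + 1)) := lt_max_of_lt_left hβ0
  have hmax1 : max β (φ / (φ + 1)) < 1 := by
    apply max_lt hβ1
    rw [div_lt_one (by linarith)]; linarith
  have hM0 : 0 < M := by rw [hM]; exact mul_pos hmax0 hε
  have hMε : M < ε := by
    rw [hM]
    calc max β (φ / (φ + 1)) * ε < 1 * ε := mul_lt_mul_of_pos_right hmax1 hε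
      _ = ε := one_mul ε
  have hd : 0 < ε - M := by linarith
  have hMβε : β * ε ≤ M := by
    rw [hM]; exact mul_le_mul_of_nonneg_right (le_max_left _ _) hε.le
  have hMφ : φ / (φ + 1) * ε ≤ M := by
    rw [hM]; exact mul_le_mul_of_nonneg_right (le_max_right _ _) hε.le
  have hMφ' : φ * ε ≤ M * (φ + 1) := by
    have e : φ / (φ + 1) * ε * (φ + 1) = φ * ε := by field_simp
    calc φ * ε = φ / (φ + 1) * ε * (φ + 1) := e.symm
      _ ≤ M * (φ + 1) := mul_le_mul_of_nonneg_right hMφ (by linarith)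
  have hkey : φ * (ε - M) ≤ M := by nlinarith
  have hdivge : φ ≤ M / (ε - M) := by rw [le_div_iff₀ hd]; linarith [hkey]
  have hcont : ContinuousOn x (Set.Icc t₀ T) := fun t ht' =>
    (hode t ht').continuousAt.continuousWithinAt
  -- upper bound: x t ≤ M
  have hupper : ∀ t ∈ Set.Icc t₀ T, x t ≤ M := by
    have := image_le_of_deriv_right_lt_deriv_boundary (f := x)
      (f' := fun t => g t * (δ t - x t / (ε - |x t|))) (a := t₀) (b := T)
      hcont
      (fun t ht' => (hode t (Set.Ico_subset_Icc_self ht')).hasDerivWithinAt)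
      (B := fun _ => M) (B' := fun _ => 0)
      (by
        have := abs_le.mp hx₀
        linarith [this.1, this.2])
      (fun _ => hasDerivAt_const _ _)
      (by
        intro t ht' hxt
        have htI : t ∈ Set.Icc t₀ T := Set.Ico_subset_Icc_self ht'
        have habs : |x t| = M := by rw [hxt]; exact abs_of_pos hM0
        have hδt := abs_le.mp (hδ_bd t htI)
        have hgpos : 0 < g t := lt_of_lt_of_le hg₁ (hg_bd t htI).1
        have : δ t - x t / (ε - |x t|) ≤ -θ := by
          rw [habs, hxt]
          have : δb + θ ≤ M / (ε - M) := by rw [← hφ]; exact hdivge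
          linarith [hδt.2]
        calc g t * (δ t - x t / (ε - |x t|)) ≤ g t * (-θ) :=
              mul_le_mul_of_nonneg_left this hgpos.le
          _ < 0 := mul_neg_of_pos_of_neg hgpos (by linarith))
    exact fun t ht' => this ht'
  -- lower bound: -x t ≤ M
  have hlower : ∀ t ∈ Set.Icc t₀ T, -x t ≤ M := by
    have := image_le_of_deriv_right_lt_deriv_boundary (f := fun s => -x s)
      (f' := fun t => -(g t * (δ t - x t / (ε - |x t|)))) (a := t₀) (b := T)
      hcont.neg
      (fun t ht' => (hode t (Set.Ico_subset_Icc_self ht')).hasDerivWithinAt.neg)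
      (B := fun _ => M) (B' := fun _ => 0)
      (by
        show -x t₀ ≤ M
        have := abs_le.mp hx₀
        linarith [this.1, this.2])
      (fun _ => hasDerivAt_const _ _)
      (by
        intro t ht' hxt
        have hxt' : -x t = M := hxt
        have htI : t ∈ Set.Icc t₀ T := Set.Ico_subset_Icc_self ht'
        have hxneg : x t = -M := by linarith
        have habs : |x t| = M := by rw [hxneg, abs_neg]; exact abs_of_pos hM0
        have hδt := abs_le.mp (hδ_bd t htI)
        have hgpos : 0 < g t := lt_of_lt_of_le hg₁ (hg_bd t htI).1
        have hpos : θ ≤ δ t - x t / (ε - |x t|) := by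
          rw [habs, hxneg, neg_div]
          have : δb + θ ≤ M / (ε - M) := by rw [← hφ]; exact hdivge
          linarith [hδt.1]
        have : 0 < g t * (δ t - x t / (ε - |x t|)) :=
          mul_pos hgpos (by linarith)
        linarith)
    exact fun t ht' => this ht'
  refine ⟨fun t ht' => abs_le.mpr ⟨by linarith [hlower t ht'], hupper t ht'⟩, ?_⟩
  intro t ht'
  exact lt_of_le_of_lt (abs_le.mpr ⟨by linarith [hlower t ht'], hupper t ht'⟩) hMε
end

section
/- Let ε > 0, 0 < g₁ ≤ g₂, δ̄ ≥ 0, θ ∈ (0,1), β ∈ (0,1), and set φ = δ̄ + θ. Let x : ℝ → ℝ be differentiable on [t₀, ∞) with |x(t)| < ε for all t ≥ t₀, and suppose there exist functions g, δ : ℝ → ℝ with g₁ ≤ g(t) ≤ g₂ and |δ(t)| ≤ δ̄ for all t ≥ t₀, such that x'(t) = g(t)·( δ(t) − x(t)/(ε − |x(t)|) ) for all t ≥ t₀, and |x(t₀)| ≤ β·ε. Then there exists T ≥ 0 (one may take T = ε/(g₁·θ)) such that |x(t)| ≤ (φ/(φ+1))·ε for all t ≥ t₀ + T. -/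
/-!
Outside the final set, `x ≥ (φ/(φ+1)) ε` is equivalent to the barrier gain `x/(ε - x)` being at
least `φ = δ̄ + θ`, which beats the perturbation by a margin `θ`; so there `x` decreases at rate at
least `g₁ θ`. Since `x(t₀) < ε`, the final set is reached within time `ε/(g₁ θ)`, and it is never
left because the vector field points strictly inwards on its boundary. The same argument applied to
`-x` (which solves the same equation with `-δ`) bounds `|x|`.
-/

open Set

section Fencing

variable {y y' : ℝ → ℝ} {a c r T : ℝ}

theorem le_of_hasDerivAt_neg_of_eq (hy : ∀ t, a ≤ t → HasDerivAt y (y' t) t)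
    (hlevel : ∀ t, a ≤ t → y t = c → y' t < 0) (ha : y a ≤ c) :
    ∀ t, a ≤ t → y t ≤ c := fun _ ht =>
  image_le_of_deriv_right_lt_deriv_boundary (B := fun _ => c) (B' := fun _ => 0)
    (fun s hs => (hy s hs.1).continuousAt.continuousWithinAt)
    (fun s hs => (hy s hs.1).hasDerivWithinAt) ha (fun _ => hasDerivAt_const _ _)
    (fun s hs => hlevel s hs.1) ⟨ht, le_rfl⟩

theorem exists_le_of_hasDerivAt_le_neg (hy : ∀ t, a ≤ t → HasDerivAt y (y' t) t)
    (hdecay : ∀ t, a ≤ t → c ≤ y t → y' t ≤ -r) (hT0 : 0 ≤ T) (hT : y a - c ≤ r * T) :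
    ∃ t₁ ∈ Icc a (a + T), y t₁ ≤ c := by
  by_contra! hfar
  have hend : y (a + T) ≤ y a - r * (a + T - a) :=
    image_le_of_deriv_right_le_deriv_boundary (B := fun t => y a - r * (t - a))
      (B' := fun _ => -r)
      (fun s hs => (hy s hs.1).continuousAt.continuousWithinAt)
      (fun s hs => (hy s hs.1).hasDerivWithinAt) (by simp)
      (by fun_prop)
      (fun s _ => (((hasDerivAt_id s).sub_const a).const_mul r |>.const_sub (y a)
        |>.hasDerivWithinAt).congr_deriv (by simp))
      (fun s hs => hdecay s hs.1 (hfar s (Ico_subset_Icc_self hs)).le)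
      (right_mem_Icc.2 (by linarith))
  linarith [hfar (a + T) (right_mem_Icc.2 (by linarith))]

theorem le_of_hasDerivAt_le_neg (hr : 0 < r) (hy : ∀ t, a ≤ t → HasDerivAt y (y' t) t)
    (hdecay : ∀ t, a ≤ t → c ≤ y t → y' t ≤ -r) (hT0 : 0 ≤ T) (hT : y a - c ≤ r * T) :
    ∀ t, a + T ≤ t → y t ≤ c := by
  obtain ⟨t₁, ⟨ha, hT₁⟩, hreach⟩ := exists_le_of_hasDerivAt_le_neg hy hdecay hT0 hT
  intro t ht
  exact le_of_hasDerivAt_neg_of_eq (fun s hs => hy s (ha.trans hs))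
    (fun s hs hs' => (hdecay s (ha.trans hs) hs'.ge).trans_lt (neg_neg_of_pos hr))
    hreach t (hT₁.trans ht)

end Fencing

theorem barrier_drift_le {ε δb θ g₁ g d x : ℝ} (hg₁ : 0 ≤ g₁) (hg : g₁ ≤ g) (hθ : 0 ≤ θ)
    (hδb : 0 ≤ δb) (hd : d ≤ δb) (hxε : |x| < ε)
    (hfar : (δb + θ) / (δb + θ + 1) * ε ≤ x) :
    g * (d - x / (ε - |x|)) ≤ -(g₁ * θ) := by
  have hφ1 : 0 < δb + θ + 1 := by linarith
  have hε : 0 < ε := (abs_nonneg x).trans_lt hxε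
  have hx : 0 ≤ x := le_trans (by positivity) hfar
  rw [abs_of_nonneg hx] at hxε ⊢
  have hgap : 0 < ε - x := sub_pos.2 hxε
  have hgain : δb + θ ≤ x / (ε - x) := by
    rw [div_mul_eq_mul_div, div_le_iff₀ hφ1] at hfar
    rw [le_div_iff₀ hgap]
    linarith
  calc g * (d - x / (ε - x)) ≤ g * -θ :=
        mul_le_mul_of_nonneg_left (by linarith) (hg₁.trans hg)
    _ ≤ g₁ * -θ := mul_le_mul_of_nonpos_right hg (by linarith)
    _ = -(g₁ * θ) := by ring

theorem barrier_closedLoop_le {ε δb θ g₁ t₀ : ℝ} {y g d : ℝ → ℝ} (hε : 0 < ε) (hg₁ : 0 < g₁)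
    (hθ : 0 < θ) (hδb : 0 ≤ δb) (hy : ∀ t, t₀ ≤ t → |y t| < ε)
    (hg : ∀ t, t₀ ≤ t → g₁ ≤ g t) (hd : ∀ t, t₀ ≤ t → d t ≤ δb)
    (hode : ∀ t, t₀ ≤ t → HasDerivAt y (g t * (d t - y t / (ε - |y t|))) t) :
    ∀ t, t₀ + ε / (g₁ * θ) ≤ t → y t ≤ (δb + θ) / (δb + θ + 1) * ε := by
  have hr : 0 < g₁ * θ := mul_pos hg₁ hθ
  refine le_of_hasDerivAt_le_neg hr hode
    (fun t ht hfar => barrier_drift_le hg₁.le (hg t ht) hθ.le hδb (hd t ht) (hy t ht) hfar)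
    (by positivity) ?_
  rw [mul_div_cancel₀ _ hr.ne']
  have hstart := (le_abs_self _).trans_lt (hy t₀ le_rfl)
  have hfinal : 0 ≤ (δb + θ) / (δb + θ + 1) * ε := by positivity
  linarith

theorem stmt_17_general (ε g₁ g₂ δb θ φ t₀ : ℝ)
    (hε : 0 < ε) (hg₁ : 0 < g₁) (hδb : 0 ≤ δb)
    (hθ0 : 0 < θ)
    (hφ : φ = δb + θ)
    (x g δ : ℝ → ℝ)
    (hx_lt : ∀ t : ℝ, t₀ ≤ t → |x t| < ε)
    (hg_bd : ∀ t : ℝ, t₀ ≤ t → g₁ ≤ g t ∧ g t ≤ g₂)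
    (hδ_bd : ∀ t : ℝ, t₀ ≤ t → |δ t| ≤ δb)
    (hode : ∀ t : ℝ, t₀ ≤ t →
      HasDerivAt x (g t * (δ t - x t / (ε - |x t|))) t) :
    ∃ T : ℝ, 0 ≤ T ∧ T ≤ ε / (g₁ * θ) ∧
      ∀ t : ℝ, t₀ + T ≤ t → |x t| ≤ (φ / (φ + 1)) * ε := by
  subst hφ
  have hg t ht := (hg_bd t ht).1
  have hupper := barrier_closedLoop_le hε hg₁ hθ0 hδb hx_lt hg
    (fun t ht => (le_abs_self _).trans (hδ_bd t ht)) hode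
  have hlower := barrier_closedLoop_le (y := fun t => -x t) (d := fun t => -δ t) hε hg₁ hθ0 hδb
    (fun t ht => by simpa using hx_lt t ht) hg (fun t ht => (neg_le_abs _).trans (hδ_bd t ht))
    (fun t ht => (hode t ht).neg.congr_deriv (by rw [abs_neg]; ring))
  refine ⟨ε / (g₁ * θ), by positivity, le_rfl, fun t ht => abs_le.2 ⟨?_, hupper t ht⟩⟩
  linarith [hlower t ht]

/-- finite-time convergence part of Theorem 1, continuous time:
the barrier-function closed loop `x' = g(t)(δ(t) - x/(ε - |x|))` starting from
`|x(t₀)| ≤ βε` reaches the final set `{x : |x| ≤ (φ/(φ+1))ε}`, `φ = δ̄ + θ`, after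
at most a finite time `T` (one may take `T = ε/(g₁θ)`) and remains there. -/
theorem stmt_17 (ε g₁ g₂ δb θ β φ t₀ : ℝ)
    (hε : 0 < ε) (hg₁ : 0 < g₁) (hg₁₂ : g₁ ≤ g₂) (hδb : 0 ≤ δb)
    (hθ0 : 0 < θ) (hθ1 : θ < 1) (hβ0 : 0 < β) (hβ1 : β < 1)
    (hφ : φ = δb + θ)
    (x g δ : ℝ → ℝ)
    (hx_lt : ∀ t : ℝ, t₀ ≤ t → |x t| < ε)
    (hg_bd : ∀ t : ℝ, t₀ ≤ t → g₁ ≤ g t ∧ g t ≤ g₂)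
    (hδ_bd : ∀ t : ℝ, t₀ ≤ t → |δ t| ≤ δb)
    (hode : ∀ t : ℝ, t₀ ≤ t →
      HasDerivAt x (g t * (δ t - x t / (ε - |x t|))) t)
    (hx₀ : |x t₀| ≤ β * ε) :
    ∃ T : ℝ, 0 ≤ T ∧ T ≤ ε / (g₁ * θ) ∧
      ∀ t : ℝ, t₀ + T ≤ t → |x t| ≤ (φ / (φ + 1)) * ε :=
  stmt_17_general ε g₁ g₂ δb θ φ t₀ hε hg₁ hδb hθ0 hφ x g δ hx_lt hg_bd hδ_bd hode
end

section
/- Let ε > 0, 0 < g₁ ≤ g₂, 0 < δ̄ ≤ c₁, τ > 0 with g₂·τ ≤ ε/(c₁ + 1)². Let t_k = t₀ + k·τ, let g, δ : ℝ → ℝ be integrable on every bounded interval with g₁ ≤ g(s) ≤ g₂ and |δ(s)| ≤ δ̄ for all s ≥ t₀. Define recursively u_k = −x_k/(ε − |x_k|) and x_{k+1} = x_k + ∫_{t_k}^{t_{k+1}} g(s)·(δ(s) + u_k) ds. If |x₀| ≤ (c₁/(c₁+1))·ε, then for every k ∈ ℕ the control value satisfies |u_k| ≤ c₁. -/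
open MeasureTheory intervalIntegral

set_option maxHeartbeats 1000000

/-- boundedness of the control, consequence of Proposition 2:
under the sampling restriction `g₂τ ≤ ε/(c₁+1)²` and starting in the
non-saturating region, the sampled barrier-function control values satisfy
`|u_k| ≤ c₁` for every `k`. -/
theorem stmt_18 (ε g₁ g₂ δb c₁ τ t₀ : ℝ)
    (hε : 0 < ε) (hg₁ : 0 < g₁) (hg₁₂ : g₁ ≤ g₂)
    (hδb : 0 < δb) (hδc : δb ≤ c₁) (hτ : 0 < τ)
    (hsamp : g₂ * τ ≤ ε / (c₁ + 1) ^ 2)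
    (g δ : ℝ → ℝ)
    (hg_int : ∀ a b : ℝ, IntervalIntegrable g volume a b)
    (hδ_int : ∀ a b : ℝ, IntervalIntegrable δ volume a b)
    (hg_bd : ∀ s : ℝ, t₀ ≤ s → g₁ ≤ g s ∧ g s ≤ g₂)
    (hδ_bd : ∀ s : ℝ, t₀ ≤ s → |δ s| ≤ δb)
    (x u : ℕ → ℝ)
    (hu : ∀ k, u k = -(x k) / (ε - |x k|))
    (hx : ∀ k : ℕ, x (k + 1) =
      x k + ∫ s in (t₀ + (k : ℝ) * τ)..(t₀ + ((k : ℝ) + 1) * τ), g s * (δ s + u k))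
    (hx₀ : |x 0| ≤ (c₁ / (c₁ + 1)) * ε) :
    ∀ k : ℕ, |u k| ≤ c₁ := by
  have hc₁ : 0 < c₁ := lt_of_lt_of_le hδb hδc
  have hc1 : (0:ℝ) < c₁ + 1 := by linarith
  have hc1sq : (0:ℝ) < (c₁ + 1) ^ 2 := by positivity
  have hsamp' : g₂ * τ * (c₁ + 1) ^ 2 ≤ ε := (le_div_iff₀ hc1sq).1 hsamp
  -- the invariant
  have key : ∀ k, |x k| * (c₁ + 1) ≤ c₁ * ε := by
    intro k
    induction k with
    | zero =>
      have := hx₀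
      rw [div_mul_eq_mul_div, le_div_iff₀ hc1] at this
      linarith
    | succ n ih =>
      set a : ℝ := t₀ + (n : ℝ) * τ with ha
      set b : ℝ := t₀ + ((n : ℝ) + 1) * τ with hb
      have hab : a ≤ b := by
        simp only [ha, hb]
        nlinarith [Nat.cast_nonneg (α := ℝ) n]
      have ht₀a : t₀ ≤ a := by
        simp only [ha]
        nlinarith [Nat.cast_nonneg (α := ℝ) n]
      have hmemt₀ : ∀ s ∈ Set.Icc a b, t₀ ≤ s := fun s hs => le_trans ht₀a hs.1
      -- integrability facts
      have hgab := hg_int a b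
      have hδab := hδ_int a b
      have hgδ_int : IntervalIntegrable (fun s => g s * δ s) volume a b := by
        apply IntervalIntegrable.mono_fun ((hδ_int a b).const_mul g₂)
        · exact (hgab.aestronglyMeasurable.mono_set
            (by rw [Set.uIoc_of_le hab])).mul
            (hδab.aestronglyMeasurable.mono_set (by rw [Set.uIoc_of_le hab]))
        · rw [Set.uIoc_of_le hab]
          rw [Filter.EventuallyLE, ae_restrict_iff' measurableSet_Ioc]
          filter_upwards with s hs
          have hs' : t₀ ≤ s := le_trans ht₀a hs.1.le
          have h1 := (hg_bd s hs').1
          have h2 := (hg_bd s hs').2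
          have h3 := hδ_bd s hs'
          have habs : |g s| ≤ g₂ := by
            rw [abs_of_nonneg (by linarith)]; exact h2
          simp only [norm_mul, Real.norm_eq_abs]
          rw [abs_of_pos (lt_of_lt_of_le hg₁ h1)]
          calc g s * |δ s| ≤ g₂ * |δ s| := by
                exact mul_le_mul_of_nonneg_right h2 (abs_nonneg _)
            _ ≤ |g₂| * |δ s| := by
                exact mul_le_mul_of_nonneg_right (le_abs_self _) (abs_nonneg _)
      have hug_int : IntervalIntegrable (fun s => u n * g s) volume a b :=
        hgab.const_mul (u n)
      -- split the integral
      set I : ℝ := ∫ s in a..b, g s with hI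
      set D : ℝ := ∫ s in a..b, g s * δ s with hD
      have hsplit : (∫ s in a..b, g s * (δ s + u n)) = D + u n * I := by
        have h1 : (∫ s in a..b, g s * (δ s + u n))
            = ∫ s in a..b, (g s * δ s + u n * g s) := by
          apply intervalIntegral.integral_congr
          intro s _
          ring
        rw [h1, intervalIntegral.integral_add hgδ_int hug_int,
          intervalIntegral.integral_const_mul]
      -- bounds on I
      have hIle : I ≤ g₂ * τ := by
        have := intervalIntegral.integral_mono_on hab hgab
          (_root_.intervalIntegrable_const (c := g₂)) (fun s hs => (hg_bd s (hmemt₀ s hs)).2)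
        rw [intervalIntegral.integral_const, smul_eq_mul] at this
        have hba : b - a = τ := by simp only [ha, hb]; ring
        rw [hba] at this
        linarith [this]
      have hIge : g₁ * τ ≤ I := by
        have := intervalIntegral.integral_mono_on hab
          (_root_.intervalIntegrable_const (c := g₁)) hgab (fun s hs => (hg_bd s (hmemt₀ s hs)).1)
        rw [intervalIntegral.integral_const, smul_eq_mul] at this
        have hba : b - a = τ := by simp only [ha, hb]; ring
        rw [hba] at this
        linarith [this]
      have hI0 : 0 ≤ I := le_trans (by positivity) hIge
      -- bound on D
      have hDle : |D| ≤ δb * I := by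
        rw [abs_le]
        constructor
        · have := intervalIntegral.integral_mono_on hab
            (hgab.const_mul (-δb)) hgδ_int
            (fun s hs => by
              have h1 := (hg_bd s (hmemt₀ s hs)).1
              have h3 := (abs_le.1 (hδ_bd s (hmemt₀ s hs))).1
              nlinarith)
          rw [intervalIntegral.integral_const_mul] at this
          rw [hD]
          nlinarith [this]
        · have := intervalIntegral.integral_mono_on hab hgδ_int
            (hgab.const_mul δb)
            (fun s hs => by
              have h1 := (hg_bd s (hmemt₀ s hs)).1
              have h3 := (abs_le.1 (hδ_bd s (hmemt₀ s hs))).2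
              nlinarith)
          rw [intervalIntegral.integral_const_mul] at this
          rw [hD]
          linarith [this]
      -- arithmetic part
      set A : ℝ := |x n| with hA
      have hA0 : 0 ≤ A := abs_nonneg _
      set E : ℝ := ε - A with hE
      have hEpos : 0 < E := by
        have h2 : ε * (c₁ + 1) = c₁ * ε + ε := by ring
        have h3 : A * (c₁ + 1) < ε * (c₁ + 1) := by linarith
        have h4 : A < ε := lt_of_mul_lt_mul_right h3 hc1.le
        rw [hE]; linarith
      have hIK : I * (c₁ + 1) ^ 2 ≤ ε :=
        le_trans (mul_le_mul_of_nonneg_right hIle hc1sq.le) hsamp'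
      have hIE : I ≤ E := by
        have h1 : I * (c₁ + 1) ≤ I * (c₁ + 1) ^ 2 := by
          have := mul_nonneg (mul_nonneg hI0 hc1.le) hc₁.le
          nlinarith [this]
        have h2 : ε ≤ E * (c₁ + 1) := by
          have : E * (c₁ + 1) = ε * (c₁ + 1) - A * (c₁ + 1) := by rw [hE]; ring
          have h2' : ε * (c₁ + 1) = c₁ * ε + ε := by ring
          linarith
        have h3 : I * (c₁ + 1) ≤ E * (c₁ + 1) := by linarith
        exact le_of_mul_le_mul_right h3 hc1
      have hxn1 : x (n + 1) = x n * (1 - I / E) + D := by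
        rw [hx n, hsplit, hu n]
        have : ε - |x n| = E := rfl
        rw [this]
        field_simp
        ring
      have habs : |x (n + 1)| ≤ A * (1 - I / E) + δb * I := by
        rw [hxn1]
        calc |x n * (1 - I / E) + D| ≤ |x n * (1 - I / E)| + |D| := abs_add_le _ _
          _ = A * |1 - I / E| + |D| := by rw [abs_mul]
          _ = A * (1 - I / E) + |D| := by
              rw [abs_of_nonneg]
              have : I / E ≤ 1 := (div_le_one hEpos).2 hIE
              linarith
          _ ≤ A * (1 - I / E) + δb * I := by linarith
      have hmain : (A * (1 - I / E) + δb * I) * (c₁ + 1) ≤ c₁ * ε := by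
        have hAIE : A * (1 - I / E) = (A * (E - I)) / E := by
          field_simp
        rw [hAIE]
        rw [div_add' _ _ _ (ne_of_gt hEpos), div_mul_eq_mul_div, div_le_iff₀ hEpos]
        rcases le_or_gt (δb * E) A with hcase | hcase
        · nlinarith [mul_nonneg hI0 (by linarith : (0:ℝ) ≤ A - δb * E),
            mul_le_mul_of_nonneg_right ih hEpos.le]
        · have hδcE : δb * E ≤ c₁ * E := mul_le_mul_of_nonneg_right hδc hEpos.le
          have hc₁E : A < c₁ * E := lt_of_lt_of_le hcase hδcE
          have h1 : I * (δb * E - A) ≤ I * (c₁ * E - A) :=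
            mul_le_mul_of_nonneg_left (by linarith) hI0
          have h1' : I * (δb * E - A) * (c₁ + 1) ^ 2 ≤ I * (c₁ * E - A) * (c₁ + 1) ^ 2 :=
            mul_le_mul_of_nonneg_right h1 hc1sq.le
          have h2 : I * (c₁ * E - A) * (c₁ + 1) ^ 2 ≤ ε * (c₁ * E - A) := by
            calc I * (c₁ * E - A) * (c₁ + 1) ^ 2
                = (I * (c₁ + 1) ^ 2) * (c₁ * E - A) := by ring
              _ ≤ ε * (c₁ * E - A) :=
                  mul_le_mul_of_nonneg_right hIK (by linarith)
          have hεAE : ε = A + E := by rw [hE]; ring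
          have h3 : A * E * (c₁ + 1) ^ 2 + ε * (c₁ * E - A) ≤ c₁ * ε * E * (c₁ + 1) := by
            rw [hE]
            nlinarith [sq_nonneg (c₁ * (ε - A) - A)]
          have h4 : ((A * (E - I) + δb * I * E) * (c₁ + 1)) * (c₁ + 1)
              ≤ (c₁ * ε * E) * (c₁ + 1) := by nlinarith [h1', h2, h3]
          exact le_of_mul_le_mul_right h4 hc1
      calc |x (n + 1)| * (c₁ + 1) ≤ (A * (1 - I / E) + δb * I) * (c₁ + 1) := by
            have h01 : 0 ≤ A * (1 - I / E) + δb * I :=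
              le_trans (abs_nonneg _) habs
            exact mul_le_mul_of_nonneg_right habs hc1.le
        _ ≤ c₁ * ε := hmain
  -- conclude
  intro k
  have hk := key k
  have hEpos : 0 < ε - |x k| := by nlinarith [abs_nonneg (x k)]
  rw [hu k, abs_div, abs_neg, abs_of_pos hEpos, div_le_iff₀ hEpos]
  linarith
end
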